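/- If a sequence of representations of a homogeneous Markov chain preserves autoinformation at lag τ (AIG([z_t]_{t=s}^T; τ) = 0), then it preserves autoinformation at every larger lag τ' ≥ τ: AIG([z_t]_{t=s}^T; τ') = 0. -/

import Mathlib

open Finset

/-- Probability mass function of a random variable `X : Ω → α` under the weight `μ`. -/
def pmfOf {Ω α : Type} [Fintype Ω] [DecidableEq α] (μ : Ω → ℝ) (X : Ω → α) (a : α) : ℝ :=
  ∑ ω ∈ Finset.univ.filter (fun ω => X ω = a), μ ω

/-- `μ` is a probability mass function on the finite sample space `Ω`. -/
def IsPMF {Ω : Type} [Fintype Ω] (μ : Ω → ℝ) : Prop :=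
  (∀ ω, 0 ≤ μ ω) ∧ ∑ ω, μ ω = 1

/-- Mutual information `I(X; Y)` of two finite-valued random variables. -/
noncomputable def mi {Ω α β : Type} [Fintype Ω] [Fintype α] [DecidableEq α]
    [Fintype β] [DecidableEq β] (μ : Ω → ℝ) (X : Ω → α) (Y : Ω → β) : ℝ :=
  ∑ a : α, ∑ b : β,
    pmfOf μ (fun ω => (X ω, Y ω)) (a, b) *
      Real.log (pmfOf μ (fun ω => (X ω, Y ω)) (a, b) / (pmfOf μ X a * pmfOf μ Y b))

/-- Conditional mutual information `I(X; Y | Z)` of finite-valued random variables. -/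
noncomputable def cmi {Ω α β γ : Type} [Fintype Ω] [Fintype α] [DecidableEq α]
    [Fintype β] [DecidableEq β] [Fintype γ] [DecidableEq γ]
    (μ : Ω → ℝ) (X : Ω → α) (Y : Ω → β) (Z : Ω → γ) : ℝ :=
  ∑ a : α, ∑ b : β, ∑ c : γ,
    pmfOf μ (fun ω => (X ω, Y ω, Z ω)) (a, b, c) *
      Real.log (pmfOf μ (fun ω => (X ω, Y ω, Z ω)) (a, b, c) * pmfOf μ Z c /
        (pmfOf μ (fun ω => (X ω, Z ω)) (a, c) * pmfOf μ (fun ω => (Y ω, Z ω)) (b, c)))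

/-- Conditional pmf `P(X = a | Y = b)`. -/
noncomputable def condPMF {Ω α β : Type} [Fintype Ω] [DecidableEq α] [DecidableEq β]
    (μ : Ω → ℝ) (X : Ω → α) (Y : Ω → β) (a : α) (b : β) : ℝ :=
  pmfOf μ (fun ω => (X ω, Y ω)) (a, b) / pmfOf μ Y b

/-- Independence of two finite-valued random variables. -/
def IndepRV {Ω α β : Type} [Fintype Ω] [Fintype α] [DecidableEq α]
    [Fintype β] [DecidableEq β] (μ : Ω → ℝ) (X : Ω → α) (Y : Ω → β) : Prop :=
  ∀ a b, pmfOf μ (fun ω => (X ω, Y ω)) (a, b) = pmfOf μ X a * pmfOf μ Y b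

namespace SIP

variable {Ω : Type} [Fintype Ω] {μ : Ω → ℝ}

section basic
variable {α β γ δ : Type} [DecidableEq α] [DecidableEq β] [DecidableEq γ] [DecidableEq δ]

lemma pmfOf_nonneg (hμ : ∀ ω, 0 ≤ μ ω) (X : Ω → α) (a : α) : 0 ≤ pmfOf μ X a :=
  Finset.sum_nonneg fun ω _ => hμ ω

lemma pmfOf_eq_sum_ite (X : Ω → α) (a : α) :
    pmfOf μ X a = ∑ ω, if X ω = a then μ ω else 0 := by
  rw [pmfOf, Finset.sum_filter]

lemma pmfOf_congr {X : Ω → α} {Y : Ω → β} {u : α} {v : β}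
    (h : ∀ ω, X ω = u ↔ Y ω = v) : pmfOf μ X u = pmfOf μ Y v := by
  unfold pmfOf
  refine Finset.sum_congr ?_ (fun _ _ => rfl)
  ext ω; simp [h ω]

lemma sum_pmfOf [Fintype α] (X : Ω → α) : ∑ a, pmfOf μ X a = ∑ ω, μ ω := by
  simp only [pmfOf_eq_sum_ite]
  rw [Finset.sum_comm]
  refine Finset.sum_congr rfl fun ω _ => ?_
  simp

lemma sum_pmfOf_one (hμ : IsPMF μ) [Fintype α] (X : Ω → α) : ∑ a, pmfOf μ X a = 1 := by
  rw [sum_pmfOf, hμ.2]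

lemma sum_pmfOf_pair_right [Fintype β] (X : Ω → α) (Y : Ω → β) (a : α) :
    ∑ b, pmfOf μ (fun ω => (X ω, Y ω)) (a, b) = pmfOf μ X a := by
  simp only [pmfOf_eq_sum_ite]
  rw [Finset.sum_comm]
  refine Finset.sum_congr rfl fun ω _ => ?_
  by_cases h : X ω = a <;> simp [Prod.ext_iff, h]

lemma sum_pmfOf_pair_left [Fintype α] (X : Ω → α) (Y : Ω → β) (b : β) :
    ∑ a, pmfOf μ (fun ω => (X ω, Y ω)) (a, b) = pmfOf μ Y b := by
  simp only [pmfOf_eq_sum_ite]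
  rw [Finset.sum_comm]
  refine Finset.sum_congr rfl fun ω _ => ?_
  by_cases h : Y ω = b <;> simp [Prod.ext_iff, h]

lemma sum_pmfOf_triple_mid [Fintype β] (X : Ω → α) (Y : Ω → β) (Z : Ω → γ) (a : α) (c : γ) :
    ∑ b, pmfOf μ (fun ω => (X ω, Y ω, Z ω)) (a, b, c) = pmfOf μ (fun ω => (X ω, Z ω)) (a, c) := by
  simp only [pmfOf_eq_sum_ite]
  rw [Finset.sum_comm]
  refine Finset.sum_congr rfl fun ω _ => ?_
  by_cases h : X ω = a ∧ Z ω = c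
  · simp [Prod.ext_iff, h]
  · rw [if_neg (by simp [Prod.ext_iff]; tauto)]
    exact Finset.sum_eq_zero fun b _ => if_neg (by simp [Prod.ext_iff]; tauto)

lemma sum_pmfOf_quad_third [Fintype γ] (X : Ω → α) (Y : Ω → β) (W : Ω → γ) (Z : Ω → δ)
    (a : α) (b : β) (c : δ) :
    ∑ w, pmfOf μ (fun ω => (X ω, Y ω, W ω, Z ω)) (a, b, w, c)
      = pmfOf μ (fun ω => (X ω, Y ω, Z ω)) (a, b, c) := by
  simp only [pmfOf_eq_sum_ite]
  rw [Finset.sum_comm]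
  refine Finset.sum_congr rfl fun ω _ => ?_
  by_cases h : X ω = a ∧ Y ω = b ∧ Z ω = c
  · simp [Prod.ext_iff, h]
  · rw [if_neg (by simp [Prod.ext_iff]; tauto)]
    exact Finset.sum_eq_zero fun w _ => if_neg (by simp [Prod.ext_iff]; tauto)

lemma pmfOf_le_pair_left (hμ : ∀ ω, 0 ≤ μ ω) [Fintype β] (X : Ω → α) (Y : Ω → β) (a : α) (b : β) :
    pmfOf μ (fun ω => (X ω, Y ω)) (a, b) ≤ pmfOf μ X a := by
  rw [← sum_pmfOf_pair_right X Y a]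
  exact Finset.single_le_sum (fun c _ => pmfOf_nonneg hμ (fun ω => (X ω, Y ω)) (a, c)) (Finset.mem_univ b)

lemma pmfOf_le_pair_right (hμ : ∀ ω, 0 ≤ μ ω) [Fintype α] (X : Ω → α) (Y : Ω → β) (a : α) (b : β) :
    pmfOf μ (fun ω => (X ω, Y ω)) (a, b) ≤ pmfOf μ Y b := by
  rw [← sum_pmfOf_pair_left X Y b]
  exact Finset.single_le_sum (fun c _ => pmfOf_nonneg hμ (fun ω => (X ω, Y ω)) (c, b)) (Finset.mem_univ a)

end basic

section gibbs

lemma klTerm_ge {p q : ℝ} (hp : 0 ≤ p) (hq : 0 ≤ q) (hsupp : q = 0 → p = 0) :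
    p - q ≤ p * Real.log (p / q) := by
  rcases eq_or_lt_of_le hp with h | hp0
  · rw [← h, zero_mul, zero_sub]; linarith
  rcases eq_or_lt_of_le hq with h | hq0
  · exact absurd (hsupp h.symm) (by linarith)
  have h1 : Real.log (q / p) ≤ q / p - 1 := Real.log_le_sub_one_of_pos (by positivity)
  have h3 : p * (q / p - 1) = q - p := by field_simp
  have h4 : p * Real.log (q / p) ≤ q - p := by
    rw [← h3]; exact mul_le_mul_of_nonneg_left h1 (le_of_lt hp0)
  have h2 : Real.log (p / q) = - Real.log (q / p) := by
    rw [← Real.log_inv]; congr 1; field_simp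
  rw [h2, mul_neg]; linarith

lemma gibbs_nonneg {ι : Type*} (s : Finset ι) (p q : ι → ℝ)
    (hp : ∀ i ∈ s, 0 ≤ p i) (hq : ∀ i ∈ s, 0 ≤ q i)
    (hsupp : ∀ i ∈ s, q i = 0 → p i = 0)
    (hsum : ∑ i ∈ s, q i ≤ ∑ i ∈ s, p i) :
    0 ≤ ∑ i ∈ s, p i * Real.log (p i / q i) := by
  have h : ∑ i ∈ s, (p i - q i) ≤ ∑ i ∈ s, p i * Real.log (p i / q i) :=
    Finset.sum_le_sum fun i hi => klTerm_ge (hp i hi) (hq i hi) (hsupp i hi)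
  rw [Finset.sum_sub_distrib] at h
  linarith

lemma gibbs_eq {ι : Type*} (s : Finset ι) (p q : ι → ℝ)
    (hp : ∀ i ∈ s, 0 ≤ p i) (hq : ∀ i ∈ s, 0 ≤ q i)
    (hsupp : ∀ i ∈ s, q i = 0 → p i = 0)
    (hsum : ∑ i ∈ s, q i = ∑ i ∈ s, p i)
    (hzero : ∑ i ∈ s, p i * Real.log (p i / q i) = 0) :
    ∀ i ∈ s, p i = q i := by
  have hterm : ∀ i ∈ s, p i * Real.log (p i / q i) - (p i - q i) = 0 := by
    intro i hi
    have h0 : ∀ j ∈ s, 0 ≤ p j * Real.log (p j / q j) - (p j - q j) :=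
      fun j hj => sub_nonneg.2 (klTerm_ge (hp j hj) (hq j hj) (hsupp j hj))
    have hs : ∑ j ∈ s, (p j * Real.log (p j / q j) - (p j - q j)) = 0 := by
      rw [Finset.sum_sub_distrib, hzero, Finset.sum_sub_distrib]
      linarith
    exact (Finset.sum_eq_zero_iff_of_nonneg h0).1 hs i hi
  intro i hi
  have heq : p i * Real.log (p i / q i) = p i - q i := by linarith [hterm i hi]
  rcases eq_or_lt_of_le (hp i hi) with h | hp0
  · have : q i = 0 := by simpa [← h] using heq.symm
    rw [← h, this]
  rcases eq_or_lt_of_le (hq i hi) with h | hq0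
  · exact absurd (hsupp i hi h.symm) (by linarith)
  by_contra hne
  have hx : q i / p i ≠ 1 := by
    intro h1
    exact hne (by field_simp at h1; linarith)
  have h1 : Real.log (q i / p i) < q i / p i - 1 :=
    Real.log_lt_sub_one_of_pos (by positivity) hx
  have h2 : Real.log (p i / q i) = - Real.log (q i / p i) := by
    rw [← Real.log_inv]; congr 1; field_simp
  have h3 : p i * (q i / p i - 1) = q i - p i := by field_simp
  have h4 : p i * Real.log (q i / p i) < q i - p i := by
    rw [← h3]; exact (mul_lt_mul_iff_right₀ hp0).2 h1
  rw [h2, mul_neg] at heq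
  linarith

end gibbs
end SIP
set_option linter.unusedSectionVars false
namespace SIP
variable {Ω : Type} [Fintype Ω] {μ : Ω → ℝ}

/-- Conditional independence of `X` and `Y` given `Z`. -/
def CI {α β γ : Type} [DecidableEq α] [DecidableEq β] [DecidableEq γ]
    (μ : Ω → ℝ) (X : Ω → α) (Y : Ω → β) (Z : Ω → γ) : Prop :=
  ∀ a b c, pmfOf μ (fun ω => (X ω, Y ω, Z ω)) (a, b, c) * pmfOf μ Z c
    = pmfOf μ (fun ω => (X ω, Z ω)) (a, c) * pmfOf μ (fun ω => (Y ω, Z ω)) (b, c)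

section mi
variable {α β γ : Type} [Fintype α] [DecidableEq α] [Fintype β] [DecidableEq β]
  [Fintype γ] [DecidableEq γ]
variable (X : Ω → α) (Y : Ω → β) (Z : Ω → γ)

lemma triple_sum_a (b : β) (c : γ) :
    ∑ a, pmfOf μ (fun ω => (X ω, Y ω, Z ω)) (a, b, c)
      = pmfOf μ (fun ω => (Y ω, Z ω)) (b, c) :=
  sum_pmfOf_pair_left X (fun ω => (Y ω, Z ω)) (b, c)

variable {X Y Z}

lemma triple_le_yz (hμ0 : ∀ ω, 0 ≤ μ ω) (a : α) (b : β) (c : γ) :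
    pmfOf μ (fun ω => (X ω, Y ω, Z ω)) (a, b, c) ≤ pmfOf μ (fun ω => (Y ω, Z ω)) (b, c) := by
  rw [← triple_sum_a X Y Z b c]
  exact Finset.single_le_sum
    (fun a' _ => pmfOf_nonneg hμ0 (fun ω => (X ω, Y ω, Z ω)) (a', b, c)) (Finset.mem_univ a)

lemma triple_le_xz (hμ0 : ∀ ω, 0 ≤ μ ω) (a : α) (b : β) (c : γ) :
    pmfOf μ (fun ω => (X ω, Y ω, Z ω)) (a, b, c) ≤ pmfOf μ (fun ω => (X ω, Z ω)) (a, c) := by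
  rw [← sum_pmfOf_triple_mid X Y Z a c]
  exact Finset.single_le_sum
    (fun b' _ => pmfOf_nonneg hμ0 (fun ω => (X ω, Y ω, Z ω)) (a, b', c)) (Finset.mem_univ b)

lemma triple_le_z (hμ0 : ∀ ω, 0 ≤ μ ω) (a : α) (b : β) (c : γ) :
    pmfOf μ (fun ω => (X ω, Y ω, Z ω)) (a, b, c) ≤ pmfOf μ Z c :=
  (triple_le_yz hμ0 a b c).trans (pmfOf_le_pair_right hμ0 Y Z b c)

lemma triple_le_y (hμ0 : ∀ ω, 0 ≤ μ ω) (a : α) (b : β) (c : γ) :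
    pmfOf μ (fun ω => (X ω, Y ω, Z ω)) (a, b, c) ≤ pmfOf μ Y b :=
  (triple_le_yz hμ0 a b c).trans (pmfOf_le_pair_left hμ0 Y Z b c)

variable (X Y Z)

lemma mi_nonneg (hμ : IsPMF μ) : 0 ≤ mi μ X Y := by
  have h := gibbs_nonneg (Finset.univ : Finset (α × β))
    (fun t => pmfOf μ (fun ω => (X ω, Y ω)) t)
    (fun t => pmfOf μ X t.1 * pmfOf μ Y t.2)
    (fun t _ => pmfOf_nonneg hμ.1 _ t)
    (fun t _ => mul_nonneg (pmfOf_nonneg hμ.1 _ _) (pmfOf_nonneg hμ.1 _ _))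
    (fun t _ h0 => by
      rcases mul_eq_zero.mp h0 with h1 | h1
      · exact le_antisymm (h1 ▸ pmfOf_le_pair_left hμ.1 X Y t.1 t.2) (pmfOf_nonneg hμ.1 _ _)
      · exact le_antisymm (h1 ▸ pmfOf_le_pair_right hμ.1 X Y t.1 t.2) (pmfOf_nonneg hμ.1 _ _))
    (by
      rw [Fintype.sum_prod_type]
      have : ∀ a : α, ∑ b, pmfOf μ X a * pmfOf μ Y b = pmfOf μ X a := by
        intro a; rw [← Finset.mul_sum, sum_pmfOf_one hμ Y, mul_one]
      rw [Finset.sum_congr rfl fun a _ => this a, sum_pmfOf_one hμ X,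
        sum_pmfOf_one hμ (fun ω => (X ω, Y ω))])
  rw [Fintype.sum_prod_type] at h
  simpa [mi] using h

lemma mi_comm : mi μ X Y = mi μ Y X := by
  rw [mi, mi, Finset.sum_comm]
  refine Finset.sum_congr rfl fun b _ => Finset.sum_congr rfl fun a _ => ?_
  have hp : pmfOf μ (fun ω => (X ω, Y ω)) (a, b) = pmfOf μ (fun ω => (Y ω, X ω)) (b, a) :=
    pmfOf_congr (by intro ω; simp [Prod.ext_iff]; tauto)
  rw [hp, mul_comm (pmfOf μ X a)]

lemma mi_swapl : mi μ (fun ω => (X ω, Z ω)) Y = mi μ (fun ω => (Z ω, X ω)) Y := by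
  rw [mi, mi]
  refine Fintype.sum_equiv (Equiv.prodComm α γ) _ _ fun u => ?_
  obtain ⟨a, c⟩ := u
  refine Finset.sum_congr rfl fun b _ => ?_
  have h1 : pmfOf μ (fun ω => ((X ω, Z ω), Y ω)) ((a, c), b)
      = pmfOf μ (fun ω => ((Z ω, X ω), Y ω)) ((c, a), b) :=
    pmfOf_congr (by intro ω; simp [Prod.ext_iff]; tauto)
  have h2 : pmfOf μ (fun ω => (X ω, Z ω)) (a, c) = pmfOf μ (fun ω => (Z ω, X ω)) (c, a) :=
    pmfOf_congr (by intro ω; simp [Prod.ext_iff]; tauto)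
  rw [h1, h2]
  rfl

end mi
end SIP
namespace SIP
variable {Ω : Type} [Fintype Ω] {μ : Ω → ℝ}

section cmi
variable {α β γ : Type} [Fintype α] [DecidableEq α] [Fintype β] [DecidableEq β]
  [Fintype γ] [DecidableEq γ]
variable {X : Ω → α} {Y : Ω → β} {Z : Ω → γ}

/-- the "independent" reference density for cmi -/
noncomputable def qCI (μ : Ω → ℝ) (X : Ω → α) (Y : Ω → β) (Z : Ω → γ) (a : α) (b : β) (c : γ) : ℝ :=
  pmfOf μ (fun ω => (X ω, Z ω)) (a, c) * pmfOf μ (fun ω => (Y ω, Z ω)) (b, c) / pmfOf μ Z c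

lemma qCI_nonneg (hμ0 : ∀ ω, 0 ≤ μ ω) (a : α) (b : β) (c : γ) : 0 ≤ qCI μ X Y Z a b c := by
  unfold qCI
  have h1 := pmfOf_nonneg hμ0 (fun ω => (X ω, Z ω)) (a, c)
  have h2 := pmfOf_nonneg hμ0 (fun ω => (Y ω, Z ω)) (b, c)
  have h3 := pmfOf_nonneg hμ0 Z c
  positivity

lemma xz_le_z (hμ0 : ∀ ω, 0 ≤ μ ω) (a : α) (c : γ) :
    pmfOf μ (fun ω => (X ω, Z ω)) (a, c) ≤ pmfOf μ Z c :=
  pmfOf_le_pair_right hμ0 X Z a c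

lemma qCI_supp (hμ0 : ∀ ω, 0 ≤ μ ω) (a : α) (b : β) (c : γ) (h : qCI μ X Y Z a b c = 0) :
    pmfOf μ (fun ω => (X ω, Y ω, Z ω)) (a, b, c) = 0 := by
  have hn := pmfOf_nonneg hμ0 (fun ω => (X ω, Y ω, Z ω)) (a, b, c)
  rcases div_eq_zero_iff.mp h with h1 | h1
  · rcases mul_eq_zero.mp h1 with h2 | h2
    · exact le_antisymm (h2 ▸ triple_le_xz hμ0 a b c) hn
    · exact le_antisymm (h2 ▸ triple_le_yz hμ0 a b c) hn
  · exact le_antisymm (h1 ▸ triple_le_z hμ0 a b c) hn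

lemma cmi_term_eq (hμ0 : ∀ ω, 0 ≤ μ ω) (a : α) (b : β) (c : γ) :
    pmfOf μ (fun ω => (X ω, Y ω, Z ω)) (a, b, c) *
      Real.log (pmfOf μ (fun ω => (X ω, Y ω, Z ω)) (a, b, c) * pmfOf μ Z c /
        (pmfOf μ (fun ω => (X ω, Z ω)) (a, c) * pmfOf μ (fun ω => (Y ω, Z ω)) (b, c)))
    = pmfOf μ (fun ω => (X ω, Y ω, Z ω)) (a, b, c) *
        Real.log (pmfOf μ (fun ω => (X ω, Y ω, Z ω)) (a, b, c) / qCI μ X Y Z a b c) := by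
  by_cases h : pmfOf μ (fun ω => (X ω, Y ω, Z ω)) (a, b, c) = 0
  · rw [h]; ring
  have hp : 0 < pmfOf μ (fun ω => (X ω, Y ω, Z ω)) (a, b, c) :=
    lt_of_le_of_ne (pmfOf_nonneg hμ0 _ _) (Ne.symm h)
  have hz : 0 < pmfOf μ Z c := lt_of_lt_of_le hp (triple_le_z hμ0 a b c)
  have hxz : 0 < pmfOf μ (fun ω => (X ω, Z ω)) (a, c) := lt_of_lt_of_le hp (triple_le_xz hμ0 a b c)
  have hyz : 0 < pmfOf μ (fun ω => (Y ω, Z ω)) (b, c) := lt_of_lt_of_le hp (triple_le_yz hμ0 a b c)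
  congr 1
  unfold qCI
  rw [div_div_eq_mul_div, mul_comm (pmfOf μ (fun ω => (X ω, Y ω, Z ω)) (a, b, c)) (pmfOf μ Z c),
    mul_div_assoc]

lemma sum_qCI (hμ0 : ∀ ω, 0 ≤ μ ω) (c : γ) :
    ∑ a, ∑ b, qCI μ X Y Z a b c = pmfOf μ Z c := by
  by_cases hz : pmfOf μ Z c = 0
  · have : ∀ a b, qCI μ X Y Z a b c = 0 := by
      intro a b
      have hxz : pmfOf μ (fun ω => (X ω, Z ω)) (a, c) = 0 :=
        le_antisymm (hz ▸ xz_le_z hμ0 a c) (pmfOf_nonneg hμ0 _ _)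
      unfold qCI; rw [hxz, zero_mul, zero_div]
    simp only [this, Finset.sum_const_zero, hz]
  · have hb : ∀ a, ∑ b, qCI μ X Y Z a b c = pmfOf μ (fun ω => (X ω, Z ω)) (a, c) := by
      intro a
      have : ∀ b, qCI μ X Y Z a b c
          = pmfOf μ (fun ω => (X ω, Z ω)) (a, c) / pmfOf μ Z c
            * pmfOf μ (fun ω => (Y ω, Z ω)) (b, c) := by
        intro b; unfold qCI; ring
      rw [Finset.sum_congr rfl fun b _ => this b, ← Finset.mul_sum,
        sum_pmfOf_pair_left Y Z c, div_mul_cancel₀ _ hz]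
    rw [Finset.sum_congr rfl fun a _ => hb a, sum_pmfOf_pair_left X Z c]

lemma cmi_eq_klsum (hμ0 : ∀ ω, 0 ≤ μ ω) :
    cmi μ X Y Z = ∑ a, ∑ b, ∑ c,
      pmfOf μ (fun ω => (X ω, Y ω, Z ω)) (a, b, c) *
        Real.log (pmfOf μ (fun ω => (X ω, Y ω, Z ω)) (a, b, c) / qCI μ X Y Z a b c) := by
  rw [cmi]
  exact Finset.sum_congr rfl fun a _ => Finset.sum_congr rfl fun b _ =>
    Finset.sum_congr rfl fun c _ => cmi_term_eq hμ0 a b c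

lemma cmi_nonneg (hμ : IsPMF μ) (X : Ω → α) (Y : Ω → β) (Z : Ω → γ) : 0 ≤ cmi μ X Y Z := by
  have h := gibbs_nonneg (Finset.univ : Finset (α × β × γ))
    (fun t => pmfOf μ (fun ω => (X ω, Y ω, Z ω)) t)
    (fun t => qCI μ X Y Z t.1 t.2.1 t.2.2)
    (fun t _ => pmfOf_nonneg hμ.1 _ t)
    (fun t _ => qCI_nonneg hμ.1 t.1 t.2.1 t.2.2)
    (fun t _ h0 => qCI_supp hμ.1 t.1 t.2.1 t.2.2 h0)
    (le_of_eq (by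
      rw [Fintype.sum_prod_type, sum_pmfOf_one hμ (fun ω => (X ω, Y ω, Z ω))]
      have : ∀ a : α, ∑ t : β × γ, qCI μ X Y Z a t.1 t.2
          = ∑ c, ∑ b, qCI μ X Y Z a b c := by
        intro a; rw [Fintype.sum_prod_type, Finset.sum_comm]
      rw [Finset.sum_congr rfl fun a _ => this a, Finset.sum_comm]
      rw [Finset.sum_congr rfl fun c _ => sum_qCI hμ.1 c, sum_pmfOf_one hμ Z]))
  rw [Fintype.sum_prod_type] at h
  simp only [Fintype.sum_prod_type] at h
  rw [cmi_eq_klsum hμ.1]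
  exact h

lemma cmi_eq_zero_iff (hμ : IsPMF μ) (X : Ω → α) (Y : Ω → β) (Z : Ω → γ) :
    cmi μ X Y Z = 0 ↔ CI μ X Y Z := by
  constructor
  · intro h0
    have key := gibbs_eq (Finset.univ : Finset (α × β × γ))
      (fun t => pmfOf μ (fun ω => (X ω, Y ω, Z ω)) t)
      (fun t => qCI μ X Y Z t.1 t.2.1 t.2.2)
      (fun t _ => pmfOf_nonneg hμ.1 _ t)
      (fun t _ => qCI_nonneg hμ.1 t.1 t.2.1 t.2.2)
      (fun t _ h => qCI_supp hμ.1 t.1 t.2.1 t.2.2 h)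
      (by
        rw [Fintype.sum_prod_type, sum_pmfOf_one hμ (fun ω => (X ω, Y ω, Z ω))]
        have : ∀ a : α, ∑ t : β × γ, qCI μ X Y Z a t.1 t.2
            = ∑ c, ∑ b, qCI μ X Y Z a b c := by
          intro a; rw [Fintype.sum_prod_type, Finset.sum_comm]
        rw [Finset.sum_congr rfl fun a _ => this a, Finset.sum_comm]
        rw [Finset.sum_congr rfl fun c _ => sum_qCI hμ.1 c, sum_pmfOf_one hμ Z])
      (by
        have h' := h0
        rw [cmi_eq_klsum hμ.1] at h'
        rw [Fintype.sum_prod_type]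
        simp only [Fintype.sum_prod_type]
        exact h')
    intro a b c
    have hq := key (a, b, c) (Finset.mem_univ _)
    simp only at hq
    by_cases hz : pmfOf μ Z c = 0
    · have h1 : pmfOf μ (fun ω => (X ω, Y ω, Z ω)) (a, b, c) = 0 :=
        le_antisymm (hz ▸ triple_le_z hμ.1 a b c) (pmfOf_nonneg hμ.1 _ _)
      have h2 : pmfOf μ (fun ω => (X ω, Z ω)) (a, c) = 0 :=
        le_antisymm (hz ▸ xz_le_z hμ.1 a c) (pmfOf_nonneg hμ.1 _ _)
      rw [h1, h2, zero_mul, zero_mul]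
    · rw [hq]
      unfold qCI
      rw [div_mul_cancel₀ _ hz]
  · intro hCI
    rw [cmi]
    refine Finset.sum_eq_zero fun a _ => Finset.sum_eq_zero fun b _ =>
      Finset.sum_eq_zero fun c _ => ?_
    by_cases h : pmfOf μ (fun ω => (X ω, Y ω, Z ω)) (a, b, c) = 0
    · rw [h, zero_mul]
    have hp : 0 < pmfOf μ (fun ω => (X ω, Y ω, Z ω)) (a, b, c) :=
      lt_of_le_of_ne (pmfOf_nonneg hμ.1 _ _) (Ne.symm h)
    have hz : 0 < pmfOf μ Z c := lt_of_lt_of_le hp (triple_le_z hμ.1 a b c)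
    have hxz : 0 < pmfOf μ (fun ω => (X ω, Z ω)) (a, c) :=
      lt_of_lt_of_le hp (triple_le_xz hμ.1 a b c)
    have hyz : 0 < pmfOf μ (fun ω => (Y ω, Z ω)) (b, c) :=
      lt_of_lt_of_le hp (triple_le_yz hμ.1 a b c)
    have harg : pmfOf μ (fun ω => (X ω, Y ω, Z ω)) (a, b, c) * pmfOf μ Z c /
        (pmfOf μ (fun ω => (X ω, Z ω)) (a, c) * pmfOf μ (fun ω => (Y ω, Z ω)) (b, c)) = 1 := by
      rw [hCI a b c]; field_simp
    rw [harg, Real.log_one, mul_zero]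

/-- Chain rule : I((X,Z);Y) = I(Z;Y) + I(X;Y|Z). -/
lemma chain (hμ0 : ∀ ω, 0 ≤ μ ω) (X : Ω → α) (Y : Ω → β) (Z : Ω → γ) :
    mi μ (fun ω => (X ω, Z ω)) Y = mi μ Z Y + cmi μ X Y Z := by
  have key : ∀ a b c,
      pmfOf μ (fun ω => (X ω, Y ω, Z ω)) (a, b, c) *
        Real.log (pmfOf μ (fun ω => (X ω, Y ω, Z ω)) (a, b, c) /
          (pmfOf μ (fun ω => (X ω, Z ω)) (a, c) * pmfOf μ Y b))
      = pmfOf μ (fun ω => (X ω, Y ω, Z ω)) (a, b, c) *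
          Real.log (pmfOf μ (fun ω => (Y ω, Z ω)) (b, c) / (pmfOf μ Z c * pmfOf μ Y b))
        + pmfOf μ (fun ω => (X ω, Y ω, Z ω)) (a, b, c) *
            Real.log (pmfOf μ (fun ω => (X ω, Y ω, Z ω)) (a, b, c) * pmfOf μ Z c /
              (pmfOf μ (fun ω => (X ω, Z ω)) (a, c) * pmfOf μ (fun ω => (Y ω, Z ω)) (b, c))) := by
    intro a b c
    by_cases h : pmfOf μ (fun ω => (X ω, Y ω, Z ω)) (a, b, c) = 0
    · rw [h]; ring
    have hp : 0 < pmfOf μ (fun ω => (X ω, Y ω, Z ω)) (a, b, c) :=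
      lt_of_le_of_ne (pmfOf_nonneg hμ0 _ _) (Ne.symm h)
    have hz : 0 < pmfOf μ Z c := lt_of_lt_of_le hp (triple_le_z hμ0 a b c)
    have hxz : 0 < pmfOf μ (fun ω => (X ω, Z ω)) (a, c) := lt_of_lt_of_le hp (triple_le_xz hμ0 a b c)
    have hyz : 0 < pmfOf μ (fun ω => (Y ω, Z ω)) (b, c) := lt_of_lt_of_le hp (triple_le_yz hμ0 a b c)
    have hy : 0 < pmfOf μ Y b := lt_of_lt_of_le hp (triple_le_y hμ0 a b c)
    rw [← mul_add, ← Real.log_mul (by positivity) (by positivity)]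
    congr 2
    field_simp
  -- now assemble the sums
  have hpair : ∀ (a : α) (c : γ) (b : β),
      pmfOf μ (fun ω => ((X ω, Z ω), Y ω)) ((a, c), b)
        = pmfOf μ (fun ω => (X ω, Y ω, Z ω)) (a, b, c) :=
    fun a c b => pmfOf_congr (by intro ω; simp [Prod.ext_iff]; tauto)
  have hzy : ∀ (c : γ) (b : β),
      pmfOf μ (fun ω => (Z ω, Y ω)) (c, b) = pmfOf μ (fun ω => (Y ω, Z ω)) (b, c) :=
    fun c b => pmfOf_congr (by intro ω; simp [Prod.ext_iff]; tauto)
  have hmi1 : mi μ (fun ω => (X ω, Z ω)) Y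
      = ∑ a, ∑ c, ∑ b, pmfOf μ (fun ω => (X ω, Y ω, Z ω)) (a, b, c) *
          Real.log (pmfOf μ (fun ω => (X ω, Y ω, Z ω)) (a, b, c) /
            (pmfOf μ (fun ω => (X ω, Z ω)) (a, c) * pmfOf μ Y b)) := by
    rw [mi, Fintype.sum_prod_type]
    exact Finset.sum_congr rfl fun a _ => Finset.sum_congr rfl fun c _ =>
      Finset.sum_congr rfl fun b _ => by rw [hpair]
  have hmi2 : mi μ Z Y
      = ∑ a, ∑ c, ∑ b, pmfOf μ (fun ω => (X ω, Y ω, Z ω)) (a, b, c) *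
          Real.log (pmfOf μ (fun ω => (Y ω, Z ω)) (b, c) / (pmfOf μ Z c * pmfOf μ Y b)) := by
    rw [mi]
    rw [Finset.sum_comm]
    have step : ∀ b (c : γ), pmfOf μ (fun ω => (Z ω, Y ω)) (c, b) *
        Real.log (pmfOf μ (fun ω => (Z ω, Y ω)) (c, b) / (pmfOf μ Z c * pmfOf μ Y b))
        = ∑ a, pmfOf μ (fun ω => (X ω, Y ω, Z ω)) (a, b, c) *
            Real.log (pmfOf μ (fun ω => (Y ω, Z ω)) (b, c) / (pmfOf μ Z c * pmfOf μ Y b)) := by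
      intro b c
      rw [hzy, ← triple_sum_a X Y Z b c, Finset.sum_mul]
    calc ∑ b, ∑ c, pmfOf μ (fun ω => (Z ω, Y ω)) (c, b) *
        Real.log (pmfOf μ (fun ω => (Z ω, Y ω)) (c, b) / (pmfOf μ Z c * pmfOf μ Y b))
        = ∑ b, ∑ c, ∑ a, pmfOf μ (fun ω => (X ω, Y ω, Z ω)) (a, b, c) *
            Real.log (pmfOf μ (fun ω => (Y ω, Z ω)) (b, c) / (pmfOf μ Z c * pmfOf μ Y b)) := by
          exact Finset.sum_congr rfl fun b _ => Finset.sum_congr rfl fun c _ => step b c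
      _ = ∑ b, ∑ a, ∑ c, pmfOf μ (fun ω => (X ω, Y ω, Z ω)) (a, b, c) *
            Real.log (pmfOf μ (fun ω => (Y ω, Z ω)) (b, c) / (pmfOf μ Z c * pmfOf μ Y b)) :=
          Finset.sum_congr rfl fun b _ => Finset.sum_comm
      _ = ∑ a, ∑ b, ∑ c, pmfOf μ (fun ω => (X ω, Y ω, Z ω)) (a, b, c) *
            Real.log (pmfOf μ (fun ω => (Y ω, Z ω)) (b, c) / (pmfOf μ Z c * pmfOf μ Y b)) := Finset.sum_comm
      _ = ∑ a, ∑ c, ∑ b, pmfOf μ (fun ω => (X ω, Y ω, Z ω)) (a, b, c) *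
            Real.log (pmfOf μ (fun ω => (Y ω, Z ω)) (b, c) / (pmfOf μ Z c * pmfOf μ Y b)) :=
          Finset.sum_congr rfl fun a _ => Finset.sum_comm
  have hcmi : cmi μ X Y Z
      = ∑ a, ∑ c, ∑ b, pmfOf μ (fun ω => (X ω, Y ω, Z ω)) (a, b, c) *
          Real.log (pmfOf μ (fun ω => (X ω, Y ω, Z ω)) (a, b, c) * pmfOf μ Z c /
            (pmfOf μ (fun ω => (X ω, Z ω)) (a, c) * pmfOf μ (fun ω => (Y ω, Z ω)) (b, c))) := by
    rw [cmi]
    exact Finset.sum_congr rfl fun a _ => Finset.sum_comm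
  rw [hmi1, hmi2, hcmi, ← Finset.sum_add_distrib]
  refine Finset.sum_congr rfl fun a _ => ?_
  rw [← Finset.sum_add_distrib]
  refine Finset.sum_congr rfl fun c _ => ?_
  rw [← Finset.sum_add_distrib]
  exact Finset.sum_congr rfl fun b _ => key a b c

end cmi
end SIP
namespace SIP
variable {Ω : Type} [Fintype Ω] {μ : Ω → ℝ}

section graphoid
variable {α β γ δ : Type} [Fintype α] [DecidableEq α] [Fintype β] [DecidableEq β]
  [Fintype γ] [DecidableEq γ] [Fintype δ] [DecidableEq δ]
variable {X : Ω → α} {Y : Ω → β} {Z : Ω → γ} {W : Ω → δ}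

lemma CI.symm (h : CI μ X Y Z) : CI μ Y X Z := by
  intro b a c
  have e1 : pmfOf μ (fun ω => (Y ω, X ω, Z ω)) (b, a, c)
      = pmfOf μ (fun ω => (X ω, Y ω, Z ω)) (a, b, c) :=
    pmfOf_congr (by intro ω; simp [Prod.ext_iff]; tauto)
  rw [e1, h a b c, mul_comm]

lemma pmfOf_tripleG (X : Ω → α) (Y : Ω → β) (Z : Ω → γ) (G : β → γ → δ) (a : α) (y' : δ) (c : γ) :
    pmfOf μ (fun ω => (X ω, G (Y ω) (Z ω), Z ω)) (a, y', c)
      = ∑ b ∈ Finset.univ.filter (fun b => G b c = y'),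
          pmfOf μ (fun ω => (X ω, Y ω, Z ω)) (a, b, c) := by
  rw [Finset.sum_filter]
  simp only [pmfOf_eq_sum_ite]
  have step : ∀ b, (if G b c = y' then ∑ ω, if (X ω, Y ω, Z ω) = (a, b, c) then μ ω else 0 else 0)
      = ∑ ω, if (X ω, Y ω, Z ω) = (a, b, c) ∧ G b c = y' then μ ω else 0 := by
    intro b
    by_cases hG : G b c = y' <;> simp [hG]
  rw [Finset.sum_congr rfl fun b _ => step b, Finset.sum_comm]
  refine Finset.sum_congr rfl fun ω _ => ?_
  rw [Finset.sum_eq_single (Y ω)]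
  · apply if_congr _ rfl rfl
    constructor <;> intro h <;> aesop
  · intro b _ hb
    rw [if_neg]
    simp only [Prod.ext_iff]
    tauto
  · intro h; exact absurd (Finset.mem_univ _) h

lemma pmfOf_pairG (Y : Ω → β) (Z : Ω → γ) (G : β → γ → δ) (y' : δ) (c : γ) :
    pmfOf μ (fun ω => (G (Y ω) (Z ω), Z ω)) (y', c)
      = ∑ b ∈ Finset.univ.filter (fun b => G b c = y'),
          pmfOf μ (fun ω => (Y ω, Z ω)) (b, c) := by
  rw [Finset.sum_filter]
  simp only [pmfOf_eq_sum_ite]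
  have step : ∀ b, (if G b c = y' then ∑ ω, if (Y ω, Z ω) = (b, c) then μ ω else 0 else 0)
      = ∑ ω, if (Y ω, Z ω) = (b, c) ∧ G b c = y' then μ ω else 0 := by
    intro b
    by_cases hG : G b c = y' <;> simp [hG]
  rw [Finset.sum_congr rfl fun b _ => step b, Finset.sum_comm]
  refine Finset.sum_congr rfl fun ω _ => ?_
  rw [Finset.sum_eq_single (Y ω)]
  · apply if_congr _ rfl rfl
    constructor <;> intro h <;> aesop
  · intro b _ hb
    rw [if_neg]
    simp only [Prod.ext_iff]
    tauto
  · intro h; exact absurd (Finset.mem_univ _) h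

lemma CI.imageY {δ' : Type} [Fintype δ'] [DecidableEq δ'] (h : CI μ X Y Z) (G : β → γ → δ') :
    CI μ X (fun ω => G (Y ω) (Z ω)) Z := by
  intro a y' c
  rw [pmfOf_tripleG X Y Z G a y' c, pmfOf_pairG Y Z G y' c, Finset.sum_mul, Finset.mul_sum]
  exact Finset.sum_congr rfl fun b _ => h a b c

lemma CI.imageX {δ' : Type} [Fintype δ'] [DecidableEq δ'] (h : CI μ X Y Z) (G : α → γ → δ') :
    CI μ (fun ω => G (X ω) (Z ω)) Y Z :=
  (h.symm.imageY G).symm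

lemma CI.swapZ {Z' : Ω → δ} (h : CI μ X Y (fun ω => (Z ω, Z' ω))) :
    CI μ X Y (fun ω => (Z' ω, Z ω)) := by
  intro a b cc
  obtain ⟨c', c⟩ := cc
  have e1 : pmfOf μ (fun ω => (X ω, Y ω, Z' ω, Z ω)) (a, b, c', c)
      = pmfOf μ (fun ω => (X ω, Y ω, Z ω, Z' ω)) (a, b, c, c') :=
    pmfOf_congr (by intro ω; simp [Prod.ext_iff]; tauto)
  have e2 : pmfOf μ (fun ω => (Z' ω, Z ω)) (c', c) = pmfOf μ (fun ω => (Z ω, Z' ω)) (c, c') :=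
    pmfOf_congr (by intro ω; simp [Prod.ext_iff]; tauto)
  have e3 : pmfOf μ (fun ω => (X ω, Z' ω, Z ω)) (a, c', c)
      = pmfOf μ (fun ω => (X ω, Z ω, Z' ω)) (a, c, c') :=
    pmfOf_congr (by intro ω; simp [Prod.ext_iff]; tauto)
  have e4 : pmfOf μ (fun ω => (Y ω, Z' ω, Z ω)) (b, c', c)
      = pmfOf μ (fun ω => (Y ω, Z ω, Z' ω)) (b, c, c') :=
    pmfOf_congr (by intro ω; simp [Prod.ext_iff]; tauto)
  exact e1 ▸ e2 ▸ e3 ▸ e4 ▸ h a b (c, c')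

lemma CI.weak_union (hμ0 : ∀ ω, 0 ≤ μ ω)
    (h : CI μ X (fun ω => (Y ω, W ω)) Z) : CI μ X W (fun ω => (Y ω, Z ω)) := by
  intro a w bc
  obtain ⟨b, c⟩ := bc
  -- flat versions
  have eH : ∀ w', pmfOf μ (fun ω => (X ω, (Y ω, W ω), Z ω)) (a, (b, w'), c)
      = pmfOf μ (fun ω => (X ω, Y ω, W ω, Z ω)) (a, b, w', c) :=
    fun w' => pmfOf_congr (by intro ω; simp [Prod.ext_iff]; tauto)
  have eR : ∀ w', pmfOf μ (fun ω => ((Y ω, W ω), Z ω)) ((b, w'), c)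
      = pmfOf μ (fun ω => (Y ω, W ω, Z ω)) (b, w', c) :=
    fun w' => pmfOf_congr (by intro ω; simp [Prod.ext_iff]; tauto)
  have H : ∀ w', pmfOf μ (fun ω => (X ω, Y ω, W ω, Z ω)) (a, b, w', c) * pmfOf μ Z c
      = pmfOf μ (fun ω => (X ω, Z ω)) (a, c) * pmfOf μ (fun ω => (Y ω, W ω, Z ω)) (b, w', c) := by
    intro w'
    have := h a (b, w') c
    rw [eH w', eR w'] at this
    exact this
  have Hz : pmfOf μ (fun ω => (X ω, Y ω, Z ω)) (a, b, c) * pmfOf μ Z c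
      = pmfOf μ (fun ω => (X ω, Z ω)) (a, c) * pmfOf μ (fun ω => (Y ω, Z ω)) (b, c) := by
    have hs := Finset.sum_congr rfl fun w' (_ : w' ∈ (Finset.univ : Finset δ)) => H w'
    rw [← Finset.sum_mul, sum_pmfOf_quad_third X Y W Z a b c, ← Finset.mul_sum,
      sum_pmfOf_triple_mid Y W Z b c] at hs
    exact hs
  -- goal flat
  have g1 : pmfOf μ (fun ω => (X ω, W ω, Y ω, Z ω)) (a, w, b, c)
      = pmfOf μ (fun ω => (X ω, Y ω, W ω, Z ω)) (a, b, w, c) :=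
    pmfOf_congr (by intro ω; simp [Prod.ext_iff]; tauto)
  have g2 : pmfOf μ (fun ω => (W ω, Y ω, Z ω)) (w, b, c)
      = pmfOf μ (fun ω => (Y ω, W ω, Z ω)) (b, w, c) :=
    pmfOf_congr (by intro ω; simp [Prod.ext_iff]; tauto)
  show pmfOf μ (fun ω => (X ω, W ω, Y ω, Z ω)) (a, w, b, c) * pmfOf μ (fun ω => (Y ω, Z ω)) (b, c)
      = pmfOf μ (fun ω => (X ω, Y ω, Z ω)) (a, b, c) * pmfOf μ (fun ω => (W ω, Y ω, Z ω)) (w, b, c)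
  rw [g1, g2]
  by_cases hz : pmfOf μ Z c = 0
  · have hq4 : pmfOf μ (fun ω => (X ω, Y ω, W ω, Z ω)) (a, b, w, c) = 0 := by
      refine le_antisymm ?_ (pmfOf_nonneg hμ0 _ _)
      calc pmfOf μ (fun ω => (X ω, Y ω, W ω, Z ω)) (a, b, w, c)
          ≤ pmfOf μ (fun ω => (Y ω, W ω, Z ω)) (b, w, c) := by
            rw [← sum_pmfOf_pair_left X (fun ω => (Y ω, W ω, Z ω)) (b, w, c)]
            exact Finset.single_le_sum
              (fun a' _ => pmfOf_nonneg hμ0 (fun ω => (X ω, Y ω, W ω, Z ω)) (a', b, w, c))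
              (Finset.mem_univ a)
        _ ≤ pmfOf μ Z c := triple_le_z hμ0 b w c
        _ = 0 := hz
    have ht3 : pmfOf μ (fun ω => (X ω, Y ω, Z ω)) (a, b, c) = 0 :=
      le_antisymm (hz ▸ triple_le_z hμ0 a b c) (pmfOf_nonneg hμ0 _ _)
    rw [hq4, ht3, zero_mul, zero_mul]
  · have key : pmfOf μ (fun ω => (X ω, Y ω, W ω, Z ω)) (a, b, w, c)
        * pmfOf μ (fun ω => (Y ω, Z ω)) (b, c) * pmfOf μ Z c
      = pmfOf μ (fun ω => (X ω, Y ω, Z ω)) (a, b, c)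
        * pmfOf μ (fun ω => (Y ω, W ω, Z ω)) (b, w, c) * pmfOf μ Z c := by
      rw [mul_right_comm, H w, mul_right_comm
        (pmfOf μ (fun ω => (X ω, Y ω, Z ω)) (a, b, c)), Hz]
      ring
    exact mul_right_cancel₀ hz key

lemma CI.contraction (hμ0 : ∀ ω, 0 ≤ μ ω)
    (h1 : CI μ X Y Z) (h2 : CI μ X W (fun ω => (Y ω, Z ω))) :
    CI μ X (fun ω => (Y ω, W ω)) Z := by
  intro a bw c
  obtain ⟨b, w⟩ := bw
  have e1 : pmfOf μ (fun ω => (X ω, (Y ω, W ω), Z ω)) (a, (b, w), c)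
      = pmfOf μ (fun ω => (X ω, Y ω, W ω, Z ω)) (a, b, w, c) :=
    pmfOf_congr (by intro ω; simp [Prod.ext_iff]; tauto)
  have e2 : pmfOf μ (fun ω => ((Y ω, W ω), Z ω)) ((b, w), c)
      = pmfOf μ (fun ω => (Y ω, W ω, Z ω)) (b, w, c) :=
    pmfOf_congr (by intro ω; simp [Prod.ext_iff]; tauto)
  rw [e1, e2]
  have f1 : pmfOf μ (fun ω => (X ω, W ω, Y ω, Z ω)) (a, w, b, c)
      = pmfOf μ (fun ω => (X ω, Y ω, W ω, Z ω)) (a, b, w, c) :=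
    pmfOf_congr (by intro ω; simp [Prod.ext_iff]; tauto)
  have f2 : pmfOf μ (fun ω => (W ω, Y ω, Z ω)) (w, b, c)
      = pmfOf μ (fun ω => (Y ω, W ω, Z ω)) (b, w, c) :=
    pmfOf_congr (by intro ω; simp [Prod.ext_iff]; tauto)
  have H2 : pmfOf μ (fun ω => (X ω, Y ω, W ω, Z ω)) (a, b, w, c)
      * pmfOf μ (fun ω => (Y ω, Z ω)) (b, c)
      = pmfOf μ (fun ω => (X ω, Y ω, Z ω)) (a, b, c)
        * pmfOf μ (fun ω => (Y ω, W ω, Z ω)) (b, w, c) := by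
    have := h2 a w (b, c)
    rw [f1, f2] at this
    exact this
  by_cases hs : pmfOf μ (fun ω => (Y ω, Z ω)) (b, c) = 0
  · have hr3 : pmfOf μ (fun ω => (Y ω, W ω, Z ω)) (b, w, c) = 0 :=
      le_antisymm (hs ▸ triple_le_xz hμ0 b w c) (pmfOf_nonneg hμ0 _ _)
    have hq4 : pmfOf μ (fun ω => (X ω, Y ω, W ω, Z ω)) (a, b, w, c) = 0 := by
      refine le_antisymm ?_ (pmfOf_nonneg hμ0 _ _)
      calc pmfOf μ (fun ω => (X ω, Y ω, W ω, Z ω)) (a, b, w, c)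
          ≤ pmfOf μ (fun ω => (Y ω, W ω, Z ω)) (b, w, c) := by
            rw [← sum_pmfOf_pair_left X (fun ω => (Y ω, W ω, Z ω)) (b, w, c)]
            exact Finset.single_le_sum
              (fun a' _ => pmfOf_nonneg hμ0 (fun ω => (X ω, Y ω, W ω, Z ω)) (a', b, w, c))
              (Finset.mem_univ a)
        _ = 0 := hr3
    rw [hq4, hr3, zero_mul, mul_zero]
  · have key : pmfOf μ (fun ω => (X ω, Y ω, W ω, Z ω)) (a, b, w, c) * pmfOf μ Z c
        * pmfOf μ (fun ω => (Y ω, Z ω)) (b, c)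
      = pmfOf μ (fun ω => (X ω, Z ω)) (a, c) * pmfOf μ (fun ω => (Y ω, W ω, Z ω)) (b, w, c)
        * pmfOf μ (fun ω => (Y ω, Z ω)) (b, c) := by
      rw [mul_right_comm, H2]
      calc pmfOf μ (fun ω => (X ω, Y ω, Z ω)) (a, b, c)
            * pmfOf μ (fun ω => (Y ω, W ω, Z ω)) (b, w, c) * pmfOf μ Z c
          = (pmfOf μ (fun ω => (X ω, Y ω, Z ω)) (a, b, c) * pmfOf μ Z c)
            * pmfOf μ (fun ω => (Y ω, W ω, Z ω)) (b, w, c) := by ring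
        _ = (pmfOf μ (fun ω => (X ω, Z ω)) (a, c) * pmfOf μ (fun ω => (Y ω, Z ω)) (b, c))
            * pmfOf μ (fun ω => (Y ω, W ω, Z ω)) (b, w, c) := by rw [h1 a b c]
        _ = _ := by ring
    exact mul_right_cancel₀ hs key

end graphoid
end SIP
namespace SIP
variable {Ω : Type} [Fintype Ω] {μ : Ω → ℝ}

section indep
variable {α β γ δ η : Type} [Fintype α] [DecidableEq α] [Fintype β] [DecidableEq β]
  [Fintype γ] [DecidableEq γ] [Fintype δ] [DecidableEq δ] [Fintype η] [DecidableEq η]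

lemma pmfOf_comp (V : Ω → α) (g : α → β) (b : β) :
    pmfOf μ (fun ω => g (V ω)) b = ∑ v ∈ Finset.univ.filter (fun v => g v = b), pmfOf μ V v := by
  rw [Finset.sum_filter]
  simp only [pmfOf_eq_sum_ite]
  have step : ∀ v, (if g v = b then ∑ ω, if V ω = v then μ ω else 0 else 0)
      = ∑ ω, if V ω = v ∧ g v = b then μ ω else 0 := by
    intro v; by_cases h : g v = b <;> simp [h]
  rw [Finset.sum_congr rfl fun v _ => step v, Finset.sum_comm]
  refine Finset.sum_congr rfl fun ω _ => ?_
  rw [Finset.sum_eq_single (V ω)]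
  · apply if_congr _ rfl rfl
    constructor <;> intro h <;> aesop
  · intro v _ hv; rw [if_neg]; tauto
  · intro h; exact absurd (Finset.mem_univ _) h

lemma pmfOf_pair_comp_right (W : Ω → δ) (V : Ω → α) (g : α → β) (w : δ) (b : β) :
    pmfOf μ (fun ω => (W ω, g (V ω))) (w, b)
      = ∑ v ∈ Finset.univ.filter (fun v => g v = b), pmfOf μ (fun ω => (W ω, V ω)) (w, v) := by
  rw [Finset.sum_filter]
  simp only [pmfOf_eq_sum_ite]
  have step : ∀ v, (if g v = b then ∑ ω, if (W ω, V ω) = (w, v) then μ ω else 0 else 0)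
      = ∑ ω, if (W ω, V ω) = (w, v) ∧ g v = b then μ ω else 0 := by
    intro v; by_cases h : g v = b <;> simp [h]
  rw [Finset.sum_congr rfl fun v _ => step v, Finset.sum_comm]
  refine Finset.sum_congr rfl fun ω _ => ?_
  rw [Finset.sum_eq_single (V ω)]
  · apply if_congr _ rfl rfl
    constructor <;> intro h <;> aesop
  · intro v _ hv; rw [if_neg]; simp only [Prod.ext_iff]; tauto
  · intro h; exact absurd (Finset.mem_univ _) h

lemma indep_symm {W : Ω → δ} {V : Ω → α} (h : IndepRV μ W V) : IndepRV μ V W := by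
  intro v w
  have e : pmfOf μ (fun ω => (V ω, W ω)) (v, w) = pmfOf μ (fun ω => (W ω, V ω)) (w, v) :=
    pmfOf_congr (by intro ω; simp [Prod.ext_iff]; tauto)
  rw [e, h w v, mul_comm]

lemma indep_comp_right {W : Ω → δ} {V : Ω → α} (h : IndepRV μ W V) (g : α → β) :
    IndepRV μ W (fun ω => g (V ω)) := by
  intro w b
  rw [pmfOf_pair_comp_right W V g w b, pmfOf_comp V g b, Finset.mul_sum]
  exact Finset.sum_congr rfl fun v _ => h w v

lemma indep_comp_left {W : Ω → δ} {V : Ω → α} (h : IndepRV μ W V) (g : δ → β) :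
    IndepRV μ (fun ω => g (W ω)) V :=
  (indep_comp_right (indep_symm h) g |> indep_symm)

/-- If `W` is independent of the pair `(Y, Z)` then `W ⫫ Y | Z`. -/
lemma CI_of_indep {W : Ω → δ} {Y : Ω → β} {Z : Ω → γ}
    (h : IndepRV μ W (fun ω => (Y ω, Z ω))) : CI μ W Y Z := by
  intro w b c
  have h3 : pmfOf μ (fun ω => (W ω, Y ω, Z ω)) (w, b, c)
      = pmfOf μ W w * pmfOf μ (fun ω => (Y ω, Z ω)) (b, c) := h w (b, c)
  have h2 : pmfOf μ (fun ω => (W ω, Z ω)) (w, c) = pmfOf μ W w * pmfOf μ Z c := by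
    have := (indep_comp_right h (fun t => t.2)) w c
    exact this
  rw [h3, h2]
  ring

/-- Extend the second component of a CI statement by an independent variable. -/
lemma CI.extendY_indep {X : Ω → α} {Y : Ω → β} {Z : Ω → γ} {W : Ω → δ}
    (h : CI μ X Y Z) (hW : IndepRV μ W (fun ω => (X ω, Y ω, Z ω))) :
    CI μ X (fun ω => (Y ω, W ω)) Z := by
  intro a bw c
  obtain ⟨b, w⟩ := bw
  have e1 : pmfOf μ (fun ω => (X ω, (Y ω, W ω), Z ω)) (a, (b, w), c)
      = pmfOf μ (fun ω => (W ω, X ω, Y ω, Z ω)) (w, a, b, c) :=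
    pmfOf_congr (by intro ω; simp [Prod.ext_iff]; tauto)
  have e2 : pmfOf μ (fun ω => ((Y ω, W ω), Z ω)) ((b, w), c)
      = pmfOf μ (fun ω => (W ω, Y ω, Z ω)) (w, b, c) :=
    pmfOf_congr (by intro ω; simp [Prod.ext_iff]; tauto)
  have f1 : pmfOf μ (fun ω => (W ω, X ω, Y ω, Z ω)) (w, a, b, c)
      = pmfOf μ W w * pmfOf μ (fun ω => (X ω, Y ω, Z ω)) (a, b, c) := hW w (a, b, c)
  have f2 : pmfOf μ (fun ω => (W ω, Y ω, Z ω)) (w, b, c)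
      = pmfOf μ W w * pmfOf μ (fun ω => (Y ω, Z ω)) (b, c) :=
    (indep_comp_right hW (fun t => t.2)) w (b, c)
  rw [e1, e2, f1, f2]
  have hh := h a b c
  linear_combination (pmfOf μ W w) * hh

lemma CI.extendX_indep {X : Ω → α} {Y : Ω → β} {Z : Ω → γ} {W : Ω → δ}
    (h : CI μ X Y Z) (hW : IndepRV μ W (fun ω => (X ω, Y ω, Z ω))) :
    CI μ (fun ω => (X ω, W ω)) Y Z := by
  have hW' : IndepRV μ W (fun ω => (Y ω, X ω, Z ω)) :=
    indep_comp_right hW (fun t => (t.2.1, t.1, t.2.2))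
  exact (CI.extendY_indep h.symm hW').symm

/-- Extend both sides of a CI statement by jointly independent variables. -/
lemma CI.extendXY_indep {X : Ω → α} {Y : Ω → β} {Z : Ω → γ} {W1 : Ω → δ} {W2 : Ω → η}
    (h : CI μ X Y Z)
    (hfac : IndepRV μ (fun ω => (W1 ω, W2 ω)) (fun ω => (X ω, Y ω, Z ω)))
    (hW : IndepRV μ W1 W2) :
    CI μ (fun ω => (X ω, W1 ω)) (fun ω => (Y ω, W2 ω)) Z := by
  intro aw bw c
  obtain ⟨a, w1⟩ := aw
  obtain ⟨b, w2⟩ := bw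
  have e1 : pmfOf μ (fun ω => ((X ω, W1 ω), (Y ω, W2 ω), Z ω)) ((a, w1), (b, w2), c)
      = pmfOf μ (fun ω => ((W1 ω, W2 ω), X ω, Y ω, Z ω)) ((w1, w2), a, b, c) :=
    pmfOf_congr (by intro ω; simp [Prod.ext_iff]; tauto)
  have e2 : pmfOf μ (fun ω => ((X ω, W1 ω), Z ω)) ((a, w1), c)
      = pmfOf μ (fun ω => (W1 ω, X ω, Z ω)) (w1, a, c) :=
    pmfOf_congr (by intro ω; simp [Prod.ext_iff]; tauto)
  have e3 : pmfOf μ (fun ω => ((Y ω, W2 ω), Z ω)) ((b, w2), c)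
      = pmfOf μ (fun ω => (W2 ω, Y ω, Z ω)) (w2, b, c) :=
    pmfOf_congr (by intro ω; simp [Prod.ext_iff]; tauto)
  have f1 : pmfOf μ (fun ω => ((W1 ω, W2 ω), X ω, Y ω, Z ω)) ((w1, w2), a, b, c)
      = pmfOf μ (fun ω => (W1 ω, W2 ω)) (w1, w2)
        * pmfOf μ (fun ω => (X ω, Y ω, Z ω)) (a, b, c) := hfac (w1, w2) (a, b, c)
  have f2 : pmfOf μ (fun ω => (W1 ω, X ω, Z ω)) (w1, a, c)
      = pmfOf μ W1 w1 * pmfOf μ (fun ω => (X ω, Z ω)) (a, c) := by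
    have h1 : IndepRV μ W1 (fun ω => (X ω, Z ω)) :=
      indep_comp_right (indep_comp_left hfac (fun t => t.1)) (fun t => (t.1, t.2.2))
    exact h1 w1 (a, c)
  have f3 : pmfOf μ (fun ω => (W2 ω, Y ω, Z ω)) (w2, b, c)
      = pmfOf μ W2 w2 * pmfOf μ (fun ω => (Y ω, Z ω)) (b, c) := by
    have h1 : IndepRV μ W2 (fun ω => (Y ω, Z ω)) :=
      indep_comp_right (indep_comp_left hfac (fun t => t.2)) (fun t => t.2)
    exact h1 w2 (b, c)
  have f4 : pmfOf μ (fun ω => (W1 ω, W2 ω)) (w1, w2) = pmfOf μ W1 w1 * pmfOf μ W2 w2 := hW w1 w2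
  rw [e1, e2, e3, f1, f2, f3, f4]
  have hh := h a b c
  linear_combination (pmfOf μ W1 w1 * pmfOf μ W2 w2) * hh

end indep
end SIP
namespace SIP

lemma sum_fiber_prod {N : ℕ} {E : Type} [Fintype E] [DecidableEq E] (q : Fin N → E → ℝ)
    (hq : ∀ k, ∑ z, q k z = 1) {ι : Type} [Fintype ι] [DecidableEq ι]
    (idx : ι → Fin N) (hinj : Function.Injective idx) (ef : ι → E)
    (S : Finset (Fin N → E)) (hSmem : ∀ e, e ∈ S ↔ ∀ t, e (idx t) = ef t) :
    ∑ e ∈ S, ∏ k, q k (e k) = ∏ t, q (idx t) (ef t) := by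
  classical
  have hS : S = Finset.univ.filter (fun e : Fin N → E => ∀ t, e (idx t) = ef t) := by
    ext e; simp [hSmem e]
  rw [hS]
  set G : Fin N → E → ℝ := fun k z =>
    (if ∀ t, idx t = k → ef t = z then (1 : ℝ) else 0) * q k z with hG
  have step1 : ∑ e ∈ Finset.univ.filter (fun e : Fin N → E => ∀ t, e (idx t) = ef t),
      ∏ k, q k (e k) = ∑ e : Fin N → E, ∏ k, G k (e k) := by
    rw [Finset.sum_filter]
    refine Finset.sum_congr rfl fun e _ => ?_
    by_cases h : ∀ t, e (idx t) = ef t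
    · rw [if_pos h]
      refine Finset.prod_congr rfl fun k _ => ?_
      rw [hG]
      simp only
      rw [if_pos fun t ht => by rw [← ht, h t], one_mul]
    · rw [if_neg h]
      push_neg at h
      obtain ⟨t, ht⟩ := h
      refine (Finset.prod_eq_zero (Finset.mem_univ (idx t)) ?_).symm
      rw [hG]
      simp only
      rw [if_neg, zero_mul]
      push_neg
      exact ⟨t, rfl, fun hc => ht hc.symm⟩
  have step2 : ∑ e : Fin N → E, ∏ k, G k (e k) = ∏ k, ∑ z, G k z :=
    (Fintype.prod_sum G).symm
  have claimA : ∀ t : ι, ∑ z, G (idx t) z = q (idx t) (ef t) := by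
    intro t
    have he : ∀ z, G (idx t) z = if ef t = z then q (idx t) z else 0 := by
      intro z
      rw [hG]
      simp only
      by_cases h : ef t = z
      · rw [if_pos h, if_pos fun t' ht' => by rw [hinj ht', ← h], one_mul]
      · rw [if_neg h, if_neg, zero_mul]
        push_neg
        exact ⟨t, rfl, h⟩
    rw [Finset.sum_congr rfl fun z _ => he z]
    simp
  have claimB : ∀ k ∈ Finset.univ, k ∉ Finset.univ.image idx → ∑ z, G k z = (1 : ℝ) := by
    intro k _ hk
    have he : ∀ z, G k z = q k z := by
      intro z
      rw [hG]
      simp only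
      rw [if_pos, one_mul]
      intro t ht
      exact absurd (Finset.mem_image_of_mem idx (Finset.mem_univ t)) (ht ▸ hk)
    rw [Finset.sum_congr rfl fun z _ => he z, hq k]
  rw [step1, step2,
    ← Finset.prod_subset (Finset.subset_univ (Finset.univ.image idx)) claimB,
    Finset.prod_image fun t _ t' _ h => hinj h]
  exact Finset.prod_congr rfl fun t _ => claimA t

end SIP
namespace SIP
variable {Ω : Type} [Fintype Ω] {μ : Ω → ℝ}

section noise
variable {A E : Type} [Fintype A] [DecidableEq A] [Fintype E] [DecidableEq E]
variable {x : ℕ → Ω → A} {ε : ℕ → Ω → E} {s T : ℕ}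

variable (hμ : IsPMF μ)
variable (hN : ∀ (e : Fin (T - s + 1) → E) (v : Fin (T - s + 1) → A),
      pmfOf μ (fun ω => ((fun i : Fin (T - s + 1) => ε (s + (i : ℕ)) ω),
          (fun i : Fin (T - s + 1) => x (s + (i : ℕ)) ω))) (e, v)
        = (∏ i : Fin (T - s + 1), pmfOf μ (ε (s + (i : ℕ))) (e i))
          * pmfOf μ (fun ω => fun i : Fin (T - s + 1) => x (s + (i : ℕ)) ω) v)

include hμ hN

lemma ev_prod (e : Fin (T - s + 1) → E) :
    pmfOf μ (fun ω => fun i : Fin (T - s + 1) => ε (s + (i : ℕ)) ω) e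
      = ∏ i : Fin (T - s + 1), pmfOf μ (ε (s + (i : ℕ))) (e i) := by
  rw [← sum_pmfOf_pair_right (fun ω => fun i : Fin (T - s + 1) => ε (s + (i : ℕ)) ω)
    (fun ω => fun i : Fin (T - s + 1) => x (s + (i : ℕ)) ω) e]
  rw [Finset.sum_congr rfl fun v _ => hN e v, ← Finset.mul_sum,
    sum_pmfOf_one hμ (fun ω => fun i : Fin (T - s + 1) => x (s + (i : ℕ)) ω), mul_one]

lemma ind0 : IndepRV μ (fun ω => fun i : Fin (T - s + 1) => ε (s + (i : ℕ)) ω)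
    (fun ω => fun i : Fin (T - s + 1) => x (s + (i : ℕ)) ω) := by
  intro e v
  rw [hN e v, ev_prod hμ hN e]

lemma master {α' β' : Type} [Fintype α'] [DecidableEq α'] [Fintype β'] [DecidableEq β']
    (G : (Fin (T - s + 1) → E) → α') (H : (Fin (T - s + 1) → A) → β') :
    IndepRV μ (fun ω => G (fun i : Fin (T - s + 1) => ε (s + (i : ℕ)) ω))
      (fun ω => H (fun i : Fin (T - s + 1) => x (s + (i : ℕ)) ω)) :=
  indep_comp_right (indep_comp_left (ind0 hμ hN) G) H

lemma eps_pmf_pair (i j : Fin (T - s + 1)) (hij : i ≠ j) (e1 e2 : E) :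
    pmfOf μ (fun ω => (ε (s + (i : ℕ)) ω, ε (s + (j : ℕ)) ω)) (e1, e2)
      = pmfOf μ (ε (s + (i : ℕ))) e1 * pmfOf μ (ε (s + (j : ℕ))) e2 := by
  have h := pmfOf_comp (μ := μ) (fun ω => fun i : Fin (T - s + 1) => ε (s + (i : ℕ)) ω)
    (fun p => (p i, p j)) (e1, e2)
  rw [Finset.sum_congr rfl fun p _ => ev_prod hμ hN p] at h
  have hinj : Function.Injective ![i, j] := by
    intro t t' htt
    fin_cases t <;> fin_cases t' <;> simp_all
  have h3 : pmfOf μ (fun ω => (ε (s + (i : ℕ)) ω, ε (s + (j : ℕ)) ω)) (e1, e2)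
      = ∏ t : Fin 2, pmfOf μ (ε (s + ((![i, j] t : Fin (T - s + 1)) : ℕ))) (![e1, e2] t) :=
    h.trans (sum_fiber_prod (fun k : Fin (T - s + 1) => pmfOf μ (ε (s + (k : ℕ))))
      (fun k => sum_pmfOf_one hμ (ε (s + (k : ℕ)))) ![i, j] hinj ![e1, e2] _
      (fun p => by simp [Finset.mem_filter, Prod.ext_iff, Fin.forall_fin_two]))
  rw [Fin.prod_univ_two] at h3
  simpa using h3

lemma eps_pmf_triple (i j k : Fin (T - s + 1)) (hij : i ≠ j) (hik : i ≠ k) (hjk : j ≠ k)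
    (e1 e2 e3 : E) :
    pmfOf μ (fun ω => (ε (s + (i : ℕ)) ω, ε (s + (j : ℕ)) ω, ε (s + (k : ℕ)) ω)) (e1, e2, e3)
      = pmfOf μ (ε (s + (i : ℕ))) e1 * pmfOf μ (ε (s + (j : ℕ))) e2
        * pmfOf μ (ε (s + (k : ℕ))) e3 := by
  have h := pmfOf_comp (μ := μ) (fun ω => fun i : Fin (T - s + 1) => ε (s + (i : ℕ)) ω)
    (fun p => (p i, p j, p k)) (e1, e2, e3)
  rw [Finset.sum_congr rfl fun p _ => ev_prod hμ hN p] at h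
  have hinj : Function.Injective ![i, j, k] := by
    intro t t' htt
    fin_cases t <;> fin_cases t' <;> simp_all
  have hmem : ∀ p : Fin (T - s + 1) → E,
      p ∈ Finset.univ.filter (fun p : Fin (T - s + 1) → E => (p i, p j, p k) = (e1, e2, e3))
        ↔ ∀ t : Fin 3, p (![i, j, k] t) = ![e1, e2, e3] t := by
    intro p
    simp only [Finset.mem_filter, Finset.mem_univ, true_and, Prod.ext_iff]
    constructor
    · intro hp t
      fin_cases t <;> simp [hp.1, hp.2.1, hp.2.2]
    · intro hp
      have h0 := hp 0
      have h1 := hp 1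
      have h2 := hp 2
      simp at h0 h1 h2
      exact ⟨h0, h1, h2⟩
  have h3 : pmfOf μ (fun ω => (ε (s + (i : ℕ)) ω, ε (s + (j : ℕ)) ω, ε (s + (k : ℕ)) ω)) (e1, e2, e3)
      = ∏ t : Fin 3, pmfOf μ (ε (s + ((![i, j, k] t : Fin (T - s + 1)) : ℕ))) (![e1, e2, e3] t) :=
    h.trans (sum_fiber_prod (fun k' : Fin (T - s + 1) => pmfOf μ (ε (s + (k' : ℕ))))
      (fun k' => sum_pmfOf_one hμ (ε (s + (k' : ℕ)))) ![i, j, k] hinj ![e1, e2, e3] _ hmem)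
  rw [Fin.prod_univ_three] at h3
  simpa [mul_assoc] using h3

/-- εₙ is independent of (x_{n'}, x_n). -/
lemma noise1 (n n' : ℕ) (hn : s ≤ n) (hnT : n ≤ T) (hn' : s ≤ n') (hn'T : n' ≤ T) :
    IndepRV μ (ε n) (fun ω => (x n' ω, x n ω)) := by
  obtain ⟨io, rfl⟩ : ∃ io, n = s + io := ⟨n - s, by omega⟩
  obtain ⟨jo, rfl⟩ : ∃ jo, n' = s + jo := ⟨n' - s, by omega⟩
  exact master hμ hN (fun p => p ⟨io, by omega⟩) (fun q => (q ⟨jo, by omega⟩, q ⟨io, by omega⟩))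

/-- εₙ is independent of any triple of chain values. -/
lemma noise_x3 (n p1 p2 p3 : ℕ) (hn : s ≤ n) (hnT : n ≤ T) (h1 : s ≤ p1) (h1T : p1 ≤ T)
    (h2 : s ≤ p2) (h2T : p2 ≤ T) (h3 : s ≤ p3) (h3T : p3 ≤ T) :
    IndepRV μ (ε n) (fun ω => (x p1 ω, x p2 ω, x p3 ω)) := by
  obtain ⟨io, rfl⟩ : ∃ io, n = s + io := ⟨n - s, by omega⟩
  obtain ⟨a1, rfl⟩ : ∃ a1, p1 = s + a1 := ⟨p1 - s, by omega⟩
  obtain ⟨a2, rfl⟩ : ∃ a2, p2 = s + a2 := ⟨p2 - s, by omega⟩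
  obtain ⟨a3, rfl⟩ : ∃ a3, p3 = s + a3 := ⟨p3 - s, by omega⟩
  exact master hμ hN (fun p => p ⟨io, by omega⟩)
    (fun q => (q ⟨a1, by omega⟩, q ⟨a2, by omega⟩, q ⟨a3, by omega⟩))

/-- the pair of noises (ε_{n1}, (ε_{n2}, ε_{n3})) is independent of (x_{p1}, x_{p2}, x_{p3}). -/
lemma noise_e3x3 (n1 n2 n3 p1 p2 p3 : ℕ) (hn1 : s ≤ n1) (hn1T : n1 ≤ T) (hn2 : s ≤ n2)
    (hn2T : n2 ≤ T) (hn3 : s ≤ n3) (hn3T : n3 ≤ T) (h1 : s ≤ p1) (h1T : p1 ≤ T)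
    (h2 : s ≤ p2) (h2T : p2 ≤ T) (h3 : s ≤ p3) (h3T : p3 ≤ T) :
    IndepRV μ (fun ω => (ε n1 ω, (ε n2 ω, ε n3 ω)))
      (fun ω => (x p1 ω, x p2 ω, x p3 ω)) := by
  obtain ⟨i1, rfl⟩ : ∃ i1, n1 = s + i1 := ⟨n1 - s, by omega⟩
  obtain ⟨i2, rfl⟩ : ∃ i2, n2 = s + i2 := ⟨n2 - s, by omega⟩
  obtain ⟨i3, rfl⟩ : ∃ i3, n3 = s + i3 := ⟨n3 - s, by omega⟩
  obtain ⟨a1, rfl⟩ : ∃ a1, p1 = s + a1 := ⟨p1 - s, by omega⟩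
  obtain ⟨a2, rfl⟩ : ∃ a2, p2 = s + a2 := ⟨p2 - s, by omega⟩
  obtain ⟨a3, rfl⟩ : ∃ a3, p3 = s + a3 := ⟨p3 - s, by omega⟩
  exact master hμ hN (fun p => (p ⟨i1, by omega⟩, (p ⟨i2, by omega⟩, p ⟨i3, by omega⟩)))
    (fun q => (q ⟨a1, by omega⟩, q ⟨a2, by omega⟩, q ⟨a3, by omega⟩))

/-- ε_{n1} is independent of the pair (ε_{n2}, ε_{n3}) when indices are distinct. -/
lemma noise_ee (n1 n2 n3 : ℕ) (hn1 : s ≤ n1) (hn1T : n1 ≤ T) (hn2 : s ≤ n2) (hn2T : n2 ≤ T)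
    (hn3 : s ≤ n3) (hn3T : n3 ≤ T) (h12 : n1 ≠ n2) (h13 : n1 ≠ n3) (h23 : n2 ≠ n3) :
    IndepRV μ (ε n1) (fun ω => (ε n2 ω, ε n3 ω)) := by
  obtain ⟨i1, rfl⟩ : ∃ i1, n1 = s + i1 := ⟨n1 - s, by omega⟩
  obtain ⟨i2, rfl⟩ : ∃ i2, n2 = s + i2 := ⟨n2 - s, by omega⟩
  obtain ⟨i3, rfl⟩ : ∃ i3, n3 = s + i3 := ⟨n3 - s, by omega⟩
  intro u v
  obtain ⟨v2, v3⟩ := v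
  have ht := eps_pmf_triple hμ hN ⟨i1, by omega⟩ ⟨i2, by omega⟩ ⟨i3, by omega⟩
    (by simp [Fin.ext_iff]; omega) (by simp [Fin.ext_iff]; omega) (by simp [Fin.ext_iff]; omega)
    u v2 v3
  have hp := eps_pmf_pair hμ hN ⟨i2, by omega⟩ ⟨i3, by omega⟩ (by simp [Fin.ext_iff]; omega) v2 v3
  calc pmfOf μ (fun ω => (ε (s + i1) ω, ε (s + i2) ω, ε (s + i3) ω)) (u, v2, v3)
      = pmfOf μ (ε (s + i1)) u * pmfOf μ (ε (s + i2)) v2 * pmfOf μ (ε (s + i3)) v3 := ht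
    _ = pmfOf μ (ε (s + i1)) u * (pmfOf μ (ε (s + i2)) v2 * pmfOf μ (ε (s + i3)) v3) := by ring
    _ = pmfOf μ (ε (s + i1)) u * pmfOf μ (fun ω => (ε (s + i2) ω, ε (s + i3) ω)) (v2, v3) := by
        rw [hp]

/-- ε_{n'} is independent of ((x_n, ε_n), x_{n'}). -/
lemma noise2 (n n' : ℕ) (hn : s ≤ n) (hnT : n ≤ T) (hn' : s ≤ n') (hn'T : n' ≤ T)
    (hne : n ≠ n') :
    IndepRV μ (ε n') (fun ω => ((x n ω, ε n ω), x n' ω)) := by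
  obtain ⟨io, rfl⟩ : ∃ io, n = s + io := ⟨n - s, by omega⟩
  obtain ⟨jo, rfl⟩ : ∃ jo, n' = s + jo := ⟨n' - s, by omega⟩
  intro u v
  obtain ⟨⟨va, ve⟩, vb⟩ := v
  have M2 : IndepRV μ (fun ω => (ε (s + jo) ω, ε (s + io) ω))
      (fun ω => (x (s + io) ω, x (s + jo) ω)) :=
    master hμ hN (fun p => (p ⟨jo, by omega⟩, p ⟨io, by omega⟩))
      (fun q => (q ⟨io, by omega⟩, q ⟨jo, by omega⟩))
  have M1 : IndepRV μ (ε (s + io)) (fun ω => (x (s + io) ω, x (s + jo) ω)) :=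
    master hμ hN (fun p => p ⟨io, by omega⟩) (fun q => (q ⟨io, by omega⟩, q ⟨jo, by omega⟩))
  have e1 : pmfOf μ (fun ω => (ε (s + jo) ω, (x (s + io) ω, ε (s + io) ω), x (s + jo) ω))
      (u, (va, ve), vb)
      = pmfOf μ (fun ω => ((ε (s + jo) ω, ε (s + io) ω), (x (s + io) ω, x (s + jo) ω)))
        ((u, ve), (va, vb)) :=
    pmfOf_congr (by intro ω; simp [Prod.ext_iff]; tauto)
  have e2 : pmfOf μ (fun ω => ((x (s + io) ω, ε (s + io) ω), x (s + jo) ω)) ((va, ve), vb)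
      = pmfOf μ (fun ω => (ε (s + io) ω, (x (s + io) ω, x (s + jo) ω))) (ve, (va, vb)) :=
    pmfOf_congr (by intro ω; simp [Prod.ext_iff]; tauto)
  have hpp : pmfOf μ (fun ω => (ε (s + jo) ω, ε (s + io) ω)) (u, ve)
      = pmfOf μ (ε (s + jo)) u * pmfOf μ (ε (s + io)) ve :=
    eps_pmf_pair hμ hN ⟨jo, by omega⟩ ⟨io, by omega⟩ (by simp [Fin.ext_iff]; omega) u ve
  rw [e1, M2 (u, ve) (va, vb), hpp, e2, M1 ve (va, vb)]
  ring

/-- ε_{n'} is independent of (x_{p1}, x_{p2}, ε_n). -/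
lemma noise4 (n n' p1 p2 : ℕ) (hn : s ≤ n) (hnT : n ≤ T) (hn' : s ≤ n') (hn'T : n' ≤ T)
    (h1 : s ≤ p1) (h1T : p1 ≤ T) (h2 : s ≤ p2) (h2T : p2 ≤ T) (hne : n ≠ n') :
    IndepRV μ (ε n') (fun ω => (x p1 ω, x p2 ω, ε n ω)) := by
  obtain ⟨io, rfl⟩ : ∃ io, n = s + io := ⟨n - s, by omega⟩
  obtain ⟨jo, rfl⟩ : ∃ jo, n' = s + jo := ⟨n' - s, by omega⟩
  obtain ⟨a1, rfl⟩ : ∃ a1, p1 = s + a1 := ⟨p1 - s, by omega⟩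
  obtain ⟨a2, rfl⟩ : ∃ a2, p2 = s + a2 := ⟨p2 - s, by omega⟩
  intro u v
  obtain ⟨v1, v2, ve⟩ := v
  have M2 : IndepRV μ (fun ω => (ε (s + jo) ω, ε (s + io) ω))
      (fun ω => (x (s + a1) ω, x (s + a2) ω)) :=
    master hμ hN (fun p => (p ⟨jo, by omega⟩, p ⟨io, by omega⟩))
      (fun q => (q ⟨a1, by omega⟩, q ⟨a2, by omega⟩))
  have M1 : IndepRV μ (ε (s + io)) (fun ω => (x (s + a1) ω, x (s + a2) ω)) :=
    master hμ hN (fun p => p ⟨io, by omega⟩) (fun q => (q ⟨a1, by omega⟩, q ⟨a2, by omega⟩))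
  have e1 : pmfOf μ (fun ω => (ε (s + jo) ω, x (s + a1) ω, x (s + a2) ω, ε (s + io) ω))
      (u, v1, v2, ve)
      = pmfOf μ (fun ω => ((ε (s + jo) ω, ε (s + io) ω), (x (s + a1) ω, x (s + a2) ω)))
        ((u, ve), (v1, v2)) :=
    pmfOf_congr (by intro ω; simp [Prod.ext_iff]; tauto)
  have e2 : pmfOf μ (fun ω => (x (s + a1) ω, x (s + a2) ω, ε (s + io) ω)) (v1, v2, ve)
      = pmfOf μ (fun ω => (ε (s + io) ω, (x (s + a1) ω, x (s + a2) ω))) (ve, (v1, v2)) :=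
    pmfOf_congr (by intro ω; simp [Prod.ext_iff]; tauto)
  have hpp : pmfOf μ (fun ω => (ε (s + jo) ω, ε (s + io) ω)) (u, ve)
      = pmfOf μ (ε (s + jo)) u * pmfOf μ (ε (s + io)) ve :=
    eps_pmf_pair hμ hN ⟨jo, by omega⟩ ⟨io, by omega⟩ (by simp [Fin.ext_iff]; omega) u ve
  rw [e1, M2 (u, ve) (v1, v2), hpp, e2, M1 ve (v1, v2)]
  ring

end noise
end SIP
namespace SIP
variable {Ω : Type} [Fintype Ω] {μ : Ω → ℝ}

section congrlemmas
variable {α β γ : Type} [Fintype α] [DecidableEq α] [Fintype β] [DecidableEq β]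
  [Fintype γ] [DecidableEq γ]
variable {X X' : Ω → α} {Y Y' : Ω → β} {Z : Ω → γ}

lemma CI.congrX (h : CI μ X Y Z) (hX : ∀ ω, X ω = X' ω) : CI μ X' Y Z := by
  intro a b c
  have e1 : pmfOf μ (fun ω => (X' ω, Y ω, Z ω)) (a, b, c)
      = pmfOf μ (fun ω => (X ω, Y ω, Z ω)) (a, b, c) :=
    pmfOf_congr (by intro ω; rw [hX ω])
  have e2 : pmfOf μ (fun ω => (X' ω, Z ω)) (a, c) = pmfOf μ (fun ω => (X ω, Z ω)) (a, c) :=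
    pmfOf_congr (by intro ω; rw [hX ω])
  rw [e1, e2]
  exact h a b c

lemma CI.congrY (h : CI μ X Y Z) (hY : ∀ ω, Y ω = Y' ω) : CI μ X Y' Z :=
  ((h.symm.congrX hY).symm)

end congrlemmas

section markov
variable {A : Type} [Fintype A] [DecidableEq A]
variable {x : ℕ → Ω → A} {s T : ℕ}

lemma markov_ci (hμ : IsPMF μ)
    (hM : ∀ m, s ≤ m → m < T →
      cmi μ (fun ω => fun i : Fin (m - s) => x (s + (i : ℕ)) ω) (x (m + 1)) (x m) = 0)
    (j : ℕ) (hsj : s ≤ j) :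
    ∀ k, j < k → k ≤ T →
      CI μ (fun ω => fun t : Fin (j - s) => x (s + (t : ℕ)) ω) (x k) (x j) := by
  refine Nat.le_induction ?_ ?_
  · intro hT1
    exact (cmi_eq_zero_iff hμ _ _ _).mp (hM j hsj (by omega))
  · intro k hk IH hkT
    have hks : s ≤ k := by omega
    have IH' := IH (by omega)
    have hM2 : CI μ (fun ω => fun t : Fin (k - s) => x (s + (t : ℕ)) ω) (x (k + 1)) (x k) :=
      (cmi_eq_zero_iff hμ _ _ _).mp (hM k hks (by omega))
    have h2 := hM2.imageX
      (fun v (_ : A) => ((fun t : Fin (j - s) => v ⟨(t : ℕ), by omega⟩), v ⟨j - s, by omega⟩))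
    have h3 : CI μ (fun ω => ((fun t : Fin (j - s) => x (s + (t : ℕ)) ω), x j ω))
        (x (k + 1)) (x k) := by
      refine h2.congrX fun ω => ?_
      refine Prod.ext rfl ?_
      show x (s + (j - s)) ω = x j ω
      rw [Nat.add_sub_cancel' hsj]
    have h4 := h3.symm.imageY (fun p (_ : A) => (p.2, p.1))
    have h5 := h4.weak_union hμ.1
    have h6 := h5.symm.swapZ
    have h7 := CI.contraction hμ.1 IH' h6
    exact h7.imageY (fun p _ => p.2)

lemma markov_ci3 (hμ : IsPMF μ)
    (hM : ∀ m, s ≤ m → m < T →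
      cmi μ (fun ω => fun i : Fin (m - s) => x (s + (i : ℕ)) ω) (x (m + 1)) (x m) = 0)
    (i j k : ℕ) (hsi : s ≤ i) (hij : i < j) (hjk : j < k) (hkT : k ≤ T) :
    CI μ (x i) (x k) (x j) := by
  have h := markov_ci hμ hM j (by omega) k hjk hkT
  have h2 := h.imageX (fun v (_ : A) => v ⟨i - s, by omega⟩)
  refine h2.congrX fun ω => ?_
  show x (s + (i - s)) ω = x i ω
  rw [Nat.add_sub_cancel' hsi]

end markov
end SIP
namespace SIP
variable {Ω : Type} [Fintype Ω] {μ : Ω → ℝ}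

section gap
variable {A Zt : Type} [Fintype A] [DecidableEq A] [Fintype Zt] [DecidableEq Zt]

lemma gap_split (hμ : IsPMF μ) (X X' : Ω → A) (Z0 Z1 : Ω → Zt)
    (ha : CI μ Z0 X' X) (hb : CI μ Z1 Z0 X') :
    mi μ X X' - mi μ Z0 Z1 = cmi μ X X' Z0 + cmi μ X' Z0 Z1 := by
  have ca : cmi μ Z0 X' X = 0 := (cmi_eq_zero_iff hμ _ _ _).mpr ha
  have cb : cmi μ Z1 Z0 X' = 0 := (cmi_eq_zero_iff hμ _ _ _).mpr hb
  have e1 := chain hμ.1 X X' Z0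
  have e2 := chain hμ.1 Z0 X' X
  have s1 := mi_swapl (μ := μ) X X' Z0
  have e3 := chain hμ.1 X' Z0 Z1
  have e4 := chain hμ.1 Z1 Z0 X'
  have s2 := mi_swapl (μ := μ) X' Z0 Z1
  have m1 := mi_comm (μ := μ) Z0 X'
  have m2 := mi_comm (μ := μ) Z1 Z0
  linarith

end gap

section cib
variable {A E Zt : Type} [Fintype A] [DecidableEq A] [Fintype E] [DecidableEq E]
  [Fintype Zt] [DecidableEq Zt]
variable {x : ℕ → Ω → A} {ε : ℕ → Ω → E} {s T : ℕ}
variable (hμ : IsPMF μ)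
variable (hN : ∀ (e : Fin (T - s + 1) → E) (v : Fin (T - s + 1) → A),
      pmfOf μ (fun ω => ((fun i : Fin (T - s + 1) => ε (s + (i : ℕ)) ω),
          (fun i : Fin (T - s + 1) => x (s + (i : ℕ)) ω))) (e, v)
        = (∏ i : Fin (T - s + 1), pmfOf μ (ε (s + (i : ℕ))) (e i))
          * pmfOf μ (fun ω => fun i : Fin (T - s + 1) => x (s + (i : ℕ)) ω) v)

include hμ hN

lemma ci_a (f : A → E → Zt) (n n' : ℕ) (hn : s ≤ n) (hnT : n ≤ T) (hn' : s ≤ n') (hn'T : n' ≤ T) :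
    CI μ (fun ω => f (x n ω) (ε n ω)) (x n') (x n) :=
  (CI_of_indep (noise1 hμ hN n n' hn hnT hn' hn'T)).imageX (fun e a => f a e)

lemma ci_b (f : A → E → Zt) (n n' : ℕ) (hn : s ≤ n) (hnT : n ≤ T) (hn' : s ≤ n') (hn'T : n' ≤ T)
    (hne : n ≠ n') :
    CI μ (fun ω => f (x n' ω) (ε n' ω)) (fun ω => f (x n ω) (ε n ω)) (x n') := by
  have h0 := CI_of_indep (noise2 hμ hN n n' hn hnT hn' hn'T hne)
  have h1 := h0.imageY (fun p (_ : A) => f p.1 p.2)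
  exact h1.imageX (fun e (c : A) => f c e)

end cib
end SIP

open SIP

/-- **Slower information preservation**: if a sequence of representations
`z_t = f(x_t, ε_t)` of a homogeneous Markov chain `[x_t]_{t=s}^T` preserves
autoinformation at lag `τ` (average autoinformation gap zero), then it preserves
autoinformation at every larger lag `τ' ≥ τ`. -/
theorem slower_information_preservation {Ω A E Z : Type} [Fintype Ω]
    [Fintype A] [DecidableEq A] [Fintype E] [DecidableEq E] [Fintype Z] [DecidableEq Z]
    (μ : Ω → ℝ) (hμ : IsPMF μ)
    (x : ℕ → Ω → A) (ε : ℕ → Ω → E) (f : A → E → Z)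
    (s T τ τ' : ℕ) (hτ : 0 < τ) (hττ' : τ ≤ τ') (hsT : s + τ' ≤ T)
    -- `[x_t]_{t=s}^T` is a Markov chain
    (hMarkov : ∀ m, s ≤ m → m < T →
      cmi μ (fun ω => fun i : Fin (m - s) => x (s + (i : ℕ)) ω) (x (m + 1)) (x m) = 0)
    -- homogeneity of the chain
    (hHomog : ∀ m m', s ≤ m → m < T → s ≤ m' → m' < T → ∀ a b : A,
      pmfOf μ (fun ω => (x m ω, x (m + 1) ω)) (a, b) * pmfOf μ (x m') a
        = pmfOf μ (fun ω => (x m' ω, x (m' + 1) ω)) (a, b) * pmfOf μ (x m) a)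
    -- the noise variables are mutually independent and independent of the chain
    (hNoise : ∀ (e : Fin (T - s + 1) → E) (v : Fin (T - s + 1) → A),
      pmfOf μ (fun ω => ((fun i : Fin (T - s + 1) => ε (s + (i : ℕ)) ω),
          (fun i : Fin (T - s + 1) => x (s + (i : ℕ)) ω))) (e, v)
        = (∏ i : Fin (T - s + 1), pmfOf μ (ε (s + (i : ℕ))) (e i))
          * pmfOf μ (fun ω => fun i : Fin (T - s + 1) => x (s + (i : ℕ)) ω) v)
    -- the sequence preserves autoinformation at lag `τ`
    (hAIG : ((T - s - τ + 1 : ℕ) : ℝ)⁻¹ *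
      ∑ m ∈ Finset.Icc s (T - τ),
        (mi μ (x m) (x (m + τ))
          - mi μ (fun ω => f (x m ω) (ε m ω)) (fun ω => f (x (m + τ) ω) (ε (m + τ) ω))) = 0) :
    ((T - s - τ' + 1 : ℕ) : ℝ)⁻¹ *
      ∑ m ∈ Finset.Icc s (T - τ'),
        (mi μ (x m) (x (m + τ'))
          - mi μ (fun ω => f (x m ω) (ε m ω)) (fun ω => f (x (m + τ') ω) (ε (m + τ') ω))) = 0 := by
  classical
  have hμ0 := hμ.1
  rcases Nat.eq_or_lt_of_le hττ' with rfl | hlt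
  · exact hAIG
  -- split every lag-τ gap as a sum of two conditional mutual informations
  have hsplit : ∀ n n', s ≤ n → n ≤ T → s ≤ n' → n' ≤ T → n ≠ n' →
      mi μ (x n) (x n') - mi μ (fun ω => f (x n ω) (ε n ω)) (fun ω => f (x n' ω) (ε n' ω))
        = cmi μ (x n) (x n') (fun ω => f (x n ω) (ε n ω))
          + cmi μ (x n') (fun ω => f (x n ω) (ε n ω)) (fun ω => f (x n' ω) (ε n' ω)) := by
    intro n n' hn hnT hn' hn'T hne
    exact gap_split hμ (x n) (x n') (fun ω => f (x n ω) (ε n ω)) (fun ω => f (x n' ω) (ε n' ω))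
      (ci_a hμ hNoise f n n' hn hnT hn' hn'T) (ci_b hμ hNoise f n n' hn hnT hn' hn'T hne)
  -- step A : the average gap at lag τ is zero, hence each term is zero
  have hfac : ((T - s - τ + 1 : ℕ) : ℝ) ≠ 0 := Nat.cast_ne_zero.mpr (by omega)
  have hsum0 : ∑ m ∈ Finset.Icc s (T - τ),
      (mi μ (x m) (x (m + τ))
        - mi μ (fun ω => f (x m ω) (ε m ω)) (fun ω => f (x (m + τ) ω) (ε (m + τ) ω))) = 0 := by
    rcases mul_eq_zero.mp hAIG with h | h
    · exact absurd h (inv_ne_zero hfac)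
    · exact h
  have hbnd : ∀ n ∈ Finset.Icc s (T - τ), s ≤ n ∧ n + τ ≤ T := by
    intro n hn
    rw [Finset.mem_Icc] at hn
    omega
  have hterm : ∀ n ∈ Finset.Icc s (T - τ),
      (0 : ℝ) ≤ mi μ (x n) (x (n + τ))
        - mi μ (fun ω => f (x n ω) (ε n ω)) (fun ω => f (x (n + τ) ω) (ε (n + τ) ω)) := by
    intro n hn
    obtain ⟨h1, h2⟩ := hbnd n hn
    rw [hsplit n (n + τ) h1 (by omega) (by omega) h2 (by omega)]
    exact add_nonneg (cmi_nonneg hμ _ _ _) (cmi_nonneg hμ _ _ _)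
  have hzero : ∀ n ∈ Finset.Icc s (T - τ),
      mi μ (x n) (x (n + τ))
        - mi μ (fun ω => f (x n ω) (ε n ω)) (fun ω => f (x (n + τ) ω) (ε (n + τ) ω)) = 0 :=
    (Finset.sum_eq_zero_iff_of_nonneg hterm).mp hsum0
  -- the two conditional mutual informations vanish for every n in range
  have hK : ∀ n, s ≤ n → n + τ ≤ T →
      CI μ (x n) (x (n + τ)) (fun ω => f (x n ω) (ε n ω))
        ∧ CI μ (x (n + τ)) (fun ω => f (x n ω) (ε n ω)) (fun ω => f (x (n + τ) ω) (ε (n + τ) ω)) := by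
    intro n h1 h2
    have hmem : n ∈ Finset.Icc s (T - τ) := by rw [Finset.mem_Icc]; omega
    have h0 := hzero n hmem
    rw [hsplit n (n + τ) h1 (by omega) (by omega) h2 (by omega)] at h0
    have c1 := cmi_nonneg hμ (x n) (x (n + τ)) (fun ω => f (x n ω) (ε n ω))
    have c2 := cmi_nonneg hμ (x (n + τ)) (fun ω => f (x n ω) (ε n ω))
      (fun ω => f (x (n + τ) ω) (ε (n + τ) ω))
    constructor
    · exact (cmi_eq_zero_iff hμ _ _ _).mp (by linarith)
    · exact (cmi_eq_zero_iff hμ _ _ _).mp (by linarith)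
  -- now prove every lag-τ' gap term vanishes
  have hsum' : ∑ m ∈ Finset.Icc s (T - τ'),
      (mi μ (x m) (x (m + τ'))
        - mi μ (fun ω => f (x m ω) (ε m ω)) (fun ω => f (x (m + τ') ω) (ε (m + τ') ω))) = 0 := by
    refine Finset.sum_eq_zero fun m hm => ?_
    rw [Finset.mem_Icc] at hm
    obtain ⟨hms, hmT'⟩ := hm
    have hmτ' : m + τ' ≤ T := by omega
    rw [hsplit m (m + τ') hms (by omega) (by omega) hmτ' (by omega)]
    -- abbreviations
    have K1m := (hK m hms (by omega)).1
    obtain ⟨KA, KB⟩ := hK (m + (τ' - τ)) (by omega) (by omega)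
    have hidx : m + (τ' - τ) + τ = m + τ' := by omega
    rw [hidx] at KA KB
    -- ** Goal 1 : CI (x m) (x (m+τ')) (z m) **
    have M := markov_ci3 hμ hMarkov m (m + τ) (m + τ') hms (by omega) (by omega) (by omega)
    have Fc : IndepRV μ (ε m) (fun ω => (x m ω, x (m + τ') ω, x (m + τ) ω)) :=
      noise_x3 hμ hNoise m m (m + τ') (m + τ) hms (by omega) hms (by omega)
        (by omega) (by omega) (by omega) (by omega)
    have L1 := M.extendX_indep Fc
    have L2 := L1.imageX (fun p (_ : A) => (p.1, f p.1 p.2))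
    have L4 := L2.symm.imageY (fun p (_ : A) => (p.2, p.1))
    have L5 := L4.weak_union hμ0
    have L7 := L5.symm.swapZ
    have L8 := CI.contraction hμ0 K1m L7
    have Goal1 : CI μ (x m) (x (m + τ')) (fun ω => f (x m ω) (ε m ω)) :=
      L8.imageY (fun p _ => p.2)
    -- ** Goal 2 : CI (x (m+τ')) (z m) (z (m+τ')) **
    -- C2 : x_{m+a} ⫫ (x_{m+τ'}, z_{m+τ'}) | z_{m+a}
    have Fd0 : IndepRV μ (ε (m + τ'))
        (fun ω => (x (m + (τ' - τ)) ω, x (m + τ') ω, ε (m + (τ' - τ)) ω)) :=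
      noise4 hμ hNoise (m + (τ' - τ)) (m + τ') (m + (τ' - τ)) (m + τ')
        (by omega) (by omega) (by omega) (by omega) (by omega) (by omega)
        (by omega) (by omega) (by omega)
    have Fd : IndepRV μ (ε (m + τ'))
        (fun ω => (x (m + (τ' - τ)) ω, x (m + τ') ω, f (x (m + (τ' - τ)) ω) (ε (m + (τ' - τ)) ω))) :=
      indep_comp_right Fd0 (fun t => (t.1, t.2.1, f t.1 t.2.2))
    have C2' := KA.extendY_indep Fd
    have C2 := C2'.imageY (fun p (_ : Z) => (p.1, f p.1 p.2))
    -- C1'' : z_m ⫫ (x_{m+τ'}, z_{m+τ'}) | (z_{m+a}, x_{m+a})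
    have M2 := markov_ci3 hμ hMarkov m (m + (τ' - τ)) (m + τ') hms (by omega) (by omega) (by omega)
    have Fe : IndepRV μ (fun ω => (ε m ω, (ε (m + τ') ω, ε (m + (τ' - τ)) ω)))
        (fun ω => (x m ω, x (m + τ') ω, x (m + (τ' - τ)) ω)) :=
      noise_e3x3 hμ hNoise m (m + τ') (m + (τ' - τ)) m (m + τ') (m + (τ' - τ))
        hms (by omega) (by omega) (by omega) (by omega) (by omega)
        hms (by omega) (by omega) (by omega) (by omega) (by omega)
    have FeW : IndepRV μ (ε m) (fun ω => (ε (m + τ') ω, ε (m + (τ' - τ)) ω)) :=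
      noise_ee hμ hNoise m (m + τ') (m + (τ' - τ))
        hms (by omega) (by omega) (by omega) (by omega) (by omega)
        (by omega) (by omega) (by omega)
    have L := M2.extendXY_indep Fe FeW
    have Limg1 := L.imageX (fun p (_ : A) => f p.1 p.2)
    have Limg2 := Limg1.imageY (fun p (c : A) => ((p.1, f p.1 p.2.1), f c p.2.2))
    have Lsw := Limg2.imageY (fun p (_ : A) => (p.2, p.1))
    have C1'' := Lsw.weak_union hμ0
    -- E : z_m ⫫ (x_{m+τ'}, z_{m+τ'}) | z_{m+a}
    have h1E := C2.symm
    have h2E := C1''.symm.swapZ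
    have E0 := CI.contraction hμ0 h1E h2E
    have E1 := E0.imageY (fun p _ => p.2)
    have E := E1.symm
    have Esw := E.imageY (fun p (_ : Z) => (p.2, p.1))
    have Ewu := Esw.weak_union hμ0
    have h2F := Ewu.symm.swapZ
    have G0 := CI.contraction hμ0 KB h2F
    have Goal2 : CI μ (x (m + τ')) (fun ω => f (x m ω) (ε m ω))
        (fun ω => f (x (m + τ') ω) (ε (m + τ') ω)) :=
      G0.imageY (fun p _ => p.2)
    rw [(cmi_eq_zero_iff hμ _ _ _).mpr Goal1, (cmi_eq_zero_iff hμ _ _ _).mpr Goal2, add_zero]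
  rw [hsum', mul_zero]
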